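/- arXiv:2407.09671 — 4 statements merged into one kernel-verified Lean document; each statement's English description precedes it below -/
import Mathlib

section
/- There exists a function f : ℕ → ℕ such that for every h ∈ ℕ, every nonempty proper minor-closed graph class H all of whose obstructions have at most h vertices, and every integer t ≥ 1, every H-chain of size at least t·f(h) contains, as a minor, the 𝐙-chain E_t^𝐙 of size t for some 2-rooted graph 𝐙 = (Z, v, u) with Z ∈ obs(H^{(c)}). (Observation 12.10) -/
open SimpleGraph

set_option autoImplicit false

/-- `H` is a minor of `G`: the standard branch-set (minor model) definition. -/
def SimpleGraph.IsMinorOf {W V : Type} (H : SimpleGraph W) (G : SimpleGraph V) : Prop :=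
  ∃ φ : W → Set V,
    (∀ w, (φ w).Nonempty) ∧
    (∀ w, (G.induce (φ w)).Connected) ∧
    (∀ w₁ w₂, w₁ ≠ w₂ → Disjoint (φ w₁) (φ w₂)) ∧
    (∀ w₁ w₂, H.Adj w₁ w₂ → ∃ v₁ ∈ φ w₁, ∃ v₂ ∈ φ w₂, G.Adj v₁ v₂)
/-- A graph class: a (property of) simple graphs over all finite vertex types.
Closure under isomorphism is subsumed by minor-closedness below, since isomorphic
graphs are minors of each other. -/
abbrev GraphClass : Type 1 := ∀ (V : Type) [Finite V], SimpleGraph V → Prop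

/-- The class `C` is minor-closed. -/
def MinorClosed (C : GraphClass) : Prop :=
  ∀ (V W : Type) [Finite V] [Finite W] (G : SimpleGraph V) (H : SimpleGraph W),
    H.IsMinorOf G → C V G → C W H

/-- The class `C` is proper: it does not contain all graphs. -/
def ProperClass (C : GraphClass) : Prop :=
  ∃ (V : Type) (_ : Finite V) (G : SimpleGraph V), ¬ C V G

/-- The class `C` is nonempty. -/
def NonemptyClass (C : GraphClass) : Prop :=
  ∃ (V : Type) (_ : Finite V) (G : SimpleGraph V), C V G
/-- `Z` is an obstruction of the class `C`: `Z ∉ C`, and `Z` is minor-minimal with this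
property, i.e. every minor of `Z` outside `C` has `Z` itself as a minor. -/
def IsObstruction (C : GraphClass) {W : Type} [Finite W] (Z : SimpleGraph W) : Prop :=
  ¬ C W Z ∧
    ∀ (U : Type) [Finite U] (Y : SimpleGraph U), Y.IsMinorOf Z → ¬ C U Y → Z.IsMinorOf Y
/-- The class `C^(c)` of all graphs each of whose connected components belongs to `C`. -/
def ClosureOf (C : GraphClass) : GraphClass :=
  fun V _ G => ∀ J : G.ConnectedComponent, C ↥(J.supp) (G.induce J.supp)
/-- The chain graph obtained from the disjoint union of the `2`-rooted graphs
`(Z i, v i, u i)`, `i = 0, …, t-1`, by adding the edges `(u i)(v (i+1))`. -/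
def chainGraph {t : ℕ} {W : Fin t → Type} (Z : ∀ i, SimpleGraph (W i)) (v u : ∀ i, W i) :
    SimpleGraph ((i : Fin t) × W i) :=
  SimpleGraph.fromRel fun a b =>
    (∃ (i : Fin t) (x y : W i), (Z i).Adj x y ∧ a = ⟨i, x⟩ ∧ b = ⟨i, y⟩) ∨
    ∃ i j : Fin t, (i : ℕ) + 1 = (j : ℕ) ∧ a = ⟨i, u i⟩ ∧ b = ⟨j, v j⟩
namespace ObsAux

lemma connected_induce_singleton {V : Type} (G : SimpleGraph V) (x : V) :
    (G.induce {x}).Connected := by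
  rw [connected_iff]
  refine ⟨?_, ⟨⟨x, rfl⟩⟩⟩
  rintro ⟨a, ha⟩ ⟨b, hb⟩
  simp only [Set.mem_singleton_iff] at ha hb
  subst ha; subst hb
  rfl

def induceHomOfLE {V : Type} (G : SimpleGraph V) {S T : Set V} (h : S ⊆ T) :
    G.induce S →g G.induce T where
  toFun := Set.inclusion h
  map_rel' := fun hab => hab

lemma reachable_induce_of_iUnion {V ι : Type} (G : SimpleGraph V) (S : ι → Set V) (U : Set V)
    (hsub : ∀ k, S k ⊆ U)
    (hconn : ∀ k, (G.induce (S k)).Preconnected)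
    (K : SimpleGraph ι)
    (hcross : ∀ i j, K.Adj i j → ∃ x ∈ S i, ∃ y ∈ S j, G.Adj x y)
    {i j : ι} (w : K.Walk i j) :
    ∀ (x : V) (hx : x ∈ S i) (y : V) (hy : y ∈ S j),
      (G.induce U).Reachable ⟨x, hsub i hx⟩ ⟨y, hsub j hy⟩ := by
  induction w with
  | nil =>
    intro x hx y hy
    exact (hconn _ ⟨x, hx⟩ ⟨y, hy⟩).map (induceHomOfLE G (hsub _))
  | @cons i c j hadj p ih =>
    intro x hx y hy
    obtain ⟨x', hx', y', hy', hxy⟩ := hcross _ _ hadj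
    have r1 : (G.induce U).Reachable ⟨x, hsub i hx⟩ ⟨x', hsub i hx'⟩ :=
      (hconn i ⟨x, hx⟩ ⟨x', hx'⟩).map (induceHomOfLE G (hsub i))
    have r2 : (G.induce U).Adj ⟨x', hsub i hx'⟩ ⟨y', hsub c hy'⟩ := hxy
    exact (r1.trans r2.reachable).trans (ih y' hy' y hy)

lemma connected_induce_union {V : Type} (G : SimpleGraph V) {S T : Set V}
    (hS : (G.induce S).Connected) (hT : (G.induce T).Connected)
    (hc : ∃ x ∈ S, ∃ y ∈ T, G.Adj x y) : (G.induce (S ∪ T)).Connected := by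
  classical
  set Sf : Bool → Set V := fun b => bif b then S else T with hSf
  have hsub : ∀ b, Sf b ⊆ S ∪ T := by
    intro b; cases b <;> simp [hSf]
  have hconn : ∀ b, (G.induce (Sf b)).Preconnected := by
    intro b; cases b
    · exact hT.preconnected
    · exact hS.preconnected
  have hcross : ∀ i j, (⊤ : SimpleGraph Bool).Adj i j →
      ∃ x ∈ Sf i, ∃ y ∈ Sf j, G.Adj x y := by
    rintro i j hij
    obtain ⟨x, hx, y, hy, hxy⟩ := hc
    cases i <;> cases j <;> simp_all [hSf]
    · exact ⟨y, hy, x, hx, hxy.symm⟩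
    · exact ⟨x, hx, y, hy, hxy⟩
  rw [connected_iff]
  constructor
  · rintro ⟨a, ha⟩ ⟨b, hb⟩
    have hmem : ∀ z (hz : z ∈ S ∪ T), ∃ i, z ∈ Sf i := by
      rintro z (hz | hz)
      exacts [⟨true, hz⟩, ⟨false, hz⟩]
    obtain ⟨ia, hia⟩ := hmem a ha
    obtain ⟨ib, hib⟩ := hmem b hb
    have w : ((⊤ : SimpleGraph Bool)).Reachable ia ib := by
      by_cases h : ia = ib
      · exact h ▸ Reachable.refl _
      · exact (SimpleGraph.Adj.reachable (by simpa using h))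
    obtain ⟨w⟩ := w
    exact reachable_induce_of_iUnion G Sf (S ∪ T) hsub hconn _ hcross w a hia b hib
  · obtain ⟨x, hx, -⟩ := hc
    exact ⟨⟨x, Or.inl hx⟩⟩

end ObsAux

namespace ObsAux
open SimpleGraph

lemma minor_refl {V : Type} (G : SimpleGraph V) : G.IsMinorOf G := by
  refine ⟨fun x => {x}, fun x => ⟨x, rfl⟩, fun x => connected_induce_singleton G x,
    fun a b hab => Set.disjoint_singleton.2 hab, fun a b hab => ⟨a, rfl, b, rfl, hab⟩⟩

lemma minor_trans {A B D : Type} {H : SimpleGraph A} {G : SimpleGraph B} {F : SimpleGraph D}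
    (h1 : H.IsMinorOf G) (h2 : G.IsMinorOf F) : H.IsMinorOf F := by
  obtain ⟨φ, φne, φconn, φdisj, φadj⟩ := h1
  obtain ⟨ψ, ψne, ψconn, ψdisj, ψadj⟩ := h2
  refine ⟨fun a => ⋃ b ∈ φ a, ψ b, ?_, ?_, ?_, ?_⟩
  · intro a
    obtain ⟨b, hb⟩ := φne a
    obtain ⟨x, hx⟩ := ψne b
    exact ⟨x, Set.mem_biUnion hb hx⟩
  · intro a
    rw [connected_iff]
    constructor
    · rintro ⟨x, hx⟩ ⟨y, hy⟩
      simp only [Set.mem_iUnion] at hx hy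
      obtain ⟨b, hb, hxb⟩ := hx
      obtain ⟨b', hb', hyb⟩ := hy
      have hsub : ∀ k : ↥(φ a), ψ k.val ⊆ ⋃ c ∈ φ a, ψ c := by
        rintro ⟨k, hk⟩ z hz
        exact Set.mem_biUnion hk hz
      obtain ⟨w⟩ := (φconn a).preconnected ⟨b, hb⟩ ⟨b', hb'⟩
      exact reachable_induce_of_iUnion F (fun k : ↥(φ a) => ψ k.val) _ hsub
        (fun k => (ψconn k.val).preconnected) (G.induce (φ a))
        (fun i j hij => ψadj i.val j.val hij) w x hxb y hyb
    · obtain ⟨b, hb⟩ := φne a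
      obtain ⟨x, hx⟩ := ψne b
      exact ⟨⟨x, Set.mem_biUnion hb hx⟩⟩
  · intro a₁ a₂ hne
    rw [Set.disjoint_left]
    intro x hx1 hx2
    simp only [Set.mem_iUnion] at hx1 hx2
    obtain ⟨b₁, hb₁, hx1⟩ := hx1
    obtain ⟨b₂, hb₂, hx2⟩ := hx2
    by_cases hbe : b₁ = b₂
    · subst hbe
      exact Set.disjoint_left.1 (φdisj a₁ a₂ hne) hb₁ hb₂
    · exact Set.disjoint_left.1 (ψdisj b₁ b₂ hbe) hx1 hx2
  · intro a₁ a₂ ha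
    obtain ⟨b₁, hb₁, b₂, hb₂, hG⟩ := φadj a₁ a₂ ha
    obtain ⟨x₁, hx₁, x₂, hx₂, hF⟩ := ψadj b₁ b₂ hG
    exact ⟨x₁, Set.mem_biUnion hb₁ hx₁, x₂, Set.mem_biUnion hb₂ hx₂, hF⟩

lemma minor_card_le {W V : Type} [Finite V] {H : SimpleGraph W} {G : SimpleGraph V}
    (h : H.IsMinorOf G) : Nat.card W ≤ Nat.card V := by
  obtain ⟨φ, φne, -, φdisj, -⟩ := h
  choose r hr using φne
  refine Nat.card_le_card_of_injective r (fun a b hab => ?_)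
  by_contra hne
  exact (Set.disjoint_left.1 (φdisj a b hne)) (hr a) (hab ▸ hr b)

/-- number of ordered adjacent pairs -/
noncomputable def ecard {V : Type} (G : SimpleGraph V) : ℕ :=
  Nat.card {p : V × V // G.Adj p.1 p.2}

lemma minor_ecard_le {W V : Type} [Finite V] {H : SimpleGraph W} {G : SimpleGraph V}
    (h : H.IsMinorOf G) : ecard H ≤ ecard G := by
  obtain ⟨φ, -, -, φdisj, φadj⟩ := h
  choose c₁ hc₁ c₂ hc₂ hG using φadj
  have key : ∀ {a b x y : W} (hab : H.Adj a b) (hxy : H.Adj x y),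
      c₁ a b hab = c₁ x y hxy → a = x := by
    intro a b x y hab hxy hcc
    by_contra hne
    exact Set.disjoint_left.1 (φdisj a x hne) (hc₁ a b hab) (hcc ▸ hc₁ x y hxy)
  have key2 : ∀ {a b x y : W} (hab : H.Adj a b) (hxy : H.Adj x y),
      c₂ a b hab = c₂ x y hxy → b = y := by
    intro a b x y hab hxy hcc
    by_contra hne
    exact Set.disjoint_left.1 (φdisj b y hne) (hc₂ a b hab) (hcc ▸ hc₂ x y hxy)
  refine Nat.card_le_card_of_injective
    (fun q => ⟨(c₁ q.1.1 q.1.2 q.2, c₂ q.1.1 q.1.2 q.2), hG q.1.1 q.1.2 q.2⟩) ?_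
  rintro ⟨⟨a, b⟩, hab⟩ ⟨⟨x, y⟩, hxy⟩ hq
  simp only [Subtype.mk.injEq, Prod.mk.injEq] at hq
  have h1 := key hab hxy hq.1
  have h2 := key2 hab hxy hq.2
  subst h1; subst h2; rfl

lemma minor_reverse_of_card {W V : Type} [Finite V] [Finite W]
    {H : SimpleGraph W} {G : SimpleGraph V} (h : H.IsMinorOf G)
    (hv : Nat.card V ≤ Nat.card W) (he : ecard G ≤ ecard H) : G.IsMinorOf H := by
  obtain ⟨φ, φne, φconn, φdisj, φadj⟩ := h
  choose r hr using φne
  have rinj : Function.Injective r := by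
    intro a b hab
    by_contra hne
    exact (Set.disjoint_left.1 (φdisj a b hne)) (hr a) (hab ▸ hr b)
  have hcards : Nat.card W = Nat.card V :=
    le_antisymm (minor_card_le ⟨φ, fun w => ⟨r w, hr w⟩, φconn, φdisj, φadj⟩) hv
  have rbij : Function.Bijective r := (Nat.bijective_iff_injective_and_card r).2 ⟨rinj, hcards⟩
  have hecards : Nat.card {p : W × W // H.Adj p.1 p.2} = Nat.card {p : V × V // G.Adj p.1 p.2} := by
    refine le_antisymm ?_ he
    exact minor_ecard_le ⟨φ, fun w => ⟨r w, hr w⟩, φconn, φdisj, φadj⟩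
  have hsingle : ∀ w, φ w = {r w} := by
    intro w
    ext x
    constructor
    · intro hx
      obtain ⟨w', rfl⟩ := rbij.2 x
      by_cases hww : w' = w
      · subst hww; rfl
      · exact absurd hx (Set.disjoint_left.1 (φdisj w' w hww) (hr w'))
    · rintro rfl
      exact hr w
  -- edge map
  choose c₁ hc₁ c₂ hc₂ hG using φadj
  have hc₁' : ∀ a b (hab : H.Adj a b), c₁ a b hab = r a := by
    intro a b hab
    have := hc₁ a b hab
    rw [hsingle a] at this
    exact this
  have hc₂' : ∀ a b (hab : H.Adj a b), c₂ a b hab = r b := by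
    intro a b hab
    have := hc₂ a b hab
    rw [hsingle b] at this
    exact this
  set E : {p : W × W // H.Adj p.1 p.2} → {p : V × V // G.Adj p.1 p.2} :=
    fun q => ⟨(c₁ q.1.1 q.1.2 q.2, c₂ q.1.1 q.1.2 q.2), hG q.1.1 q.1.2 q.2⟩ with hE
  have Einj : Function.Injective E := by
    rintro ⟨⟨a, b⟩, hab⟩ ⟨⟨x, y⟩, hxy⟩ hq
    simp only [hE, Subtype.mk.injEq, Prod.mk.injEq, hc₁', hc₂'] at hq
    have := rinj hq.1
    have := rinj hq.2
    subst this; subst ‹a = x›; rfl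
  have Ebij : Function.Bijective E := (Nat.bijective_iff_injective_and_card E).2 ⟨Einj, hecards⟩
  -- reverse model via the equivalence
  let re := Equiv.ofBijective r rbij
  refine ⟨fun x => {re.symm x}, fun x => ⟨_, rfl⟩, fun x => connected_induce_singleton H _,
    fun a b hne => Set.disjoint_singleton.2 (fun q => hne (re.symm.injective q)), ?_⟩
  intro v₁ v₂ hadj
  obtain ⟨⟨⟨w₁, w₂⟩, hw⟩, hEq⟩ := Ebij.2 ⟨(v₁, v₂), hadj⟩
  simp only [hE, Subtype.mk.injEq, Prod.mk.injEq, hc₁', hc₂'] at hEq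
  refine ⟨w₁, ?_, w₂, ?_, hw⟩
  · have : re w₁ = v₁ := hEq.1
    simp [← this]
  · have : re w₂ = v₂ := hEq.2
    simp [← this]

lemma minor_of_isEmpty {W V : Type} [IsEmpty W] (H : SimpleGraph W) (G : SimpleGraph V) :
    H.IsMinorOf G :=
  ⟨fun w => isEmptyElim w, fun w => isEmptyElim w, fun w => isEmptyElim w,
   fun w => isEmptyElim w, fun w => isEmptyElim w⟩

lemma induce_minor {V : Type} (G : SimpleGraph V) (S : Set V) :
    (G.induce S).IsMinorOf G := by
  refine ⟨fun w => {w.val}, fun w => ⟨w.val, rfl⟩, fun w => connected_induce_singleton G _,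
    fun a b hne => Set.disjoint_singleton.2 (fun q => hne (Subtype.ext q)),
    fun a b hab => ⟨a.val, rfl, b.val, rfl, hab⟩⟩

lemma minor_induce_univ {V : Type} (G : SimpleGraph V) {S : Set V} (hS : S = Set.univ) :
    G.IsMinorOf (G.induce S) := by
  subst hS
  refine ⟨fun x => {⟨x, trivial⟩}, fun x => ⟨_, rfl⟩,
    fun x => connected_induce_singleton _ _,
    fun a b hne => Set.disjoint_singleton.2 (fun q => hne (congrArg Subtype.val q)), ?_⟩
  intro a b hab
  exact ⟨⟨a, trivial⟩, rfl, ⟨b, trivial⟩, rfl, hab⟩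

lemma spanning_minor {V : Type} {H H' : SimpleGraph V}
    (hle : ∀ a b, H.Adj a b → H'.Adj a b) : H.IsMinorOf H' := by
  refine ⟨fun x => {x}, fun x => ⟨x, rfl⟩, fun x => connected_induce_singleton H' x,
    fun a b hab => Set.disjoint_singleton.2 hab, fun a b hab => ⟨a, rfl, b, rfl, hle a b hab⟩⟩

end ObsAux







namespace ObsAux

lemma grow {U V : Type} [Finite V] [Nonempty U] (G : SimpleGraph V) (hG : G.Preconnected) :
    ∀ (n : ℕ) (ψ : U → Set V),
      (∀ u, (ψ u).Nonempty) → (∀ u, (G.induce (ψ u)).Connected) →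
      (∀ u₁ u₂, u₁ ≠ u₂ → Disjoint (ψ u₁) (ψ u₂)) →
      Set.ncard (⋃ u, ψ u)ᶜ ≤ n →
      ∃ ψ' : U → Set V, (∀ u, ψ u ⊆ ψ' u) ∧ (∀ u, (ψ' u).Nonempty) ∧
        (∀ u, (G.induce (ψ' u)).Connected) ∧
        (∀ u₁ u₂, u₁ ≠ u₂ → Disjoint (ψ' u₁) (ψ' u₂)) ∧ (⋃ u, ψ' u) = Set.univ := by
  intro n
  induction n with
  | zero =>
    intro ψ h1 h2 h3 hcard
    refine ⟨ψ, fun u => le_rfl, h1, h2, h3, ?_⟩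
    have : (⋃ u, ψ u)ᶜ = ∅ := by
      have := Set.ncard_eq_zero (Set.toFinite _) |>.1 (Nat.le_zero.1 hcard)
      exact this
    rw [← Set.compl_empty_iff, this]
  | succ n ih =>
    intro ψ h1 h2 h3 hcard
    by_cases hU : (⋃ u, ψ u) = Set.univ
    · exact ⟨ψ, fun u => le_rfl, h1, h2, h3, hU⟩
    · have hcompl : ((⋃ u, ψ u)ᶜ).Nonempty := by
        rw [Set.nonempty_compl]
        exact hU
      obtain ⟨z, hz⟩ := hcompl
      obtain ⟨u₀⟩ := ‹Nonempty U›
      obtain ⟨x, hx⟩ := h1 u₀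
      obtain ⟨w⟩ := hG x z
      obtain ⟨d, -, hd1, hd2⟩ := w.exists_boundary_dart (⋃ u, ψ u)
        (Set.mem_iUnion.2 ⟨u₀, hx⟩) hz
      obtain ⟨u₁, hu₁⟩ := Set.mem_iUnion.1 hd1
      classical
      have hnotmem : ∀ u, d.toProd.2 ∉ ψ u := by
        intro u hmem
        exact hd2 (Set.mem_iUnion.2 ⟨u, hmem⟩)
      have main : ∀ ψ' : U → Set V,
          ψ' = (fun u => if u = u₁ then insert d.toProd.2 (ψ u₁) else ψ u) →
          ∃ ψ'' : U → Set V, (∀ u, ψ u ⊆ ψ'' u) ∧ (∀ u, (ψ'' u).Nonempty) ∧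
            (∀ u, (G.induce (ψ'' u)).Connected) ∧
            (∀ u₁' u₂', u₁' ≠ u₂' → Disjoint (ψ'' u₁') (ψ'' u₂')) ∧ (⋃ u, ψ'' u) = Set.univ := by
        intro ψ' hψ'
        have hval : ∀ u, ψ' u = if u = u₁ then insert d.toProd.2 (ψ u₁) else ψ u := by
          intro u; rw [hψ']
        have hsub : ∀ u, ψ u ⊆ ψ' u := by
          intro u
          rw [hval u]
          by_cases hu : u = u₁
          · subst hu; rw [if_pos rfl]; exact Set.subset_insert _ _
          · rw [if_neg hu]
        have h1' : ∀ u, (ψ' u).Nonempty := fun u => (h1 u).mono (hsub u)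
        have h2' : ∀ u, (G.induce (ψ' u)).Connected := by
          intro u
          rw [hval u]
          by_cases hu : u = u₁
          · rw [if_pos hu, Set.insert_eq]
            refine connected_induce_union G (connected_induce_singleton G _) (h2 u₁) ?_
            exact ⟨d.toProd.2, rfl, d.toProd.1, hu₁, d.adj.symm⟩
          · rw [if_neg hu]; exact h2 u
        have h3' : ∀ u₁' u₂', u₁' ≠ u₂' → Disjoint (ψ' u₁') (ψ' u₂') := by
          intro a b hab
          rw [hval a, hval b]
          by_cases ha : a = u₁ <;> by_cases hb : b = u₁
          · exact absurd (ha.trans hb.symm) hab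
          · rw [if_pos ha, if_neg hb]
            rw [Set.disjoint_left]
            rintro x (rfl | hx) hxb
            · exact hnotmem b hxb
            · exact Set.disjoint_left.1 (h3 u₁ b (by rw [← ha]; exact hab)) hx hxb
          · rw [if_neg ha, if_pos hb]
            rw [Set.disjoint_right]
            rintro x (rfl | hx) hxa
            · exact hnotmem a hxa
            · exact Set.disjoint_left.1 (h3 u₁ a (by rw [← hb]; exact hab.symm)) hx hxa
          · rw [if_neg ha, if_neg hb]; exact h3 a b hab
        have hcard' : Set.ncard (⋃ u, ψ' u)ᶜ ≤ n := by
          have hunion : (⋃ u, ψ' u) = insert d.toProd.2 (⋃ u, ψ u) := by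
            ext x
            simp only [Set.mem_iUnion, Set.mem_insert_iff]
            constructor
            · rintro ⟨u, hu⟩
              rw [hval u] at hu
              by_cases huu : u = u₁
              · rw [if_pos huu, Set.mem_insert_iff] at hu
                rcases hu with rfl | hu
                · exact Or.inl rfl
                · exact Or.inr ⟨u₁, hu⟩
              · rw [if_neg huu] at hu
                exact Or.inr ⟨u, hu⟩
            · rintro (rfl | ⟨u, hu⟩)
              · exact ⟨u₁, by rw [hval u₁, if_pos rfl]; exact Set.mem_insert _ _⟩
              · refine ⟨u, ?_⟩
                rw [hval u]
                by_cases huu : u = u₁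
                · subst huu; rw [if_pos rfl]; exact Set.mem_insert_of_mem _ hu
                · rwa [if_neg huu]
          rw [hunion]
          have hins : (insert d.toProd.2 (⋃ u, ψ u))ᶜ = (⋃ u, ψ u)ᶜ \ {d.toProd.2} := by
            ext x
            simp only [Set.mem_compl_iff, Set.mem_insert_iff, Set.mem_diff,
              Set.mem_singleton_iff]
            tauto
          rw [hins]
          have hlt : ((⋃ u, ψ u)ᶜ \ {d.toProd.2}).ncard < ((⋃ u, ψ u)ᶜ).ncard :=
            Set.ncard_diff_singleton_lt_of_mem hd2 (Set.toFinite _)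
          omega
        obtain ⟨ψ'', hs, a1, a2, a3, a4⟩ := ih ψ' h1' h2' h3' hcard'
        exact ⟨ψ'', fun u => (hsub u).trans (hs u), a1, a2, a3, a4⟩
      exact main _ rfl

lemma quotient_connected {V U : Type} [Nonempty U] (G : SimpleGraph V) (hG : G.Preconnected)
    (ψ : U → Set V) (hne : ∀ u, (ψ u).Nonempty)
    (hcov : ∀ x : V, ∃ u, x ∈ ψ u)
    (hdisj : ∀ u₁ u₂, u₁ ≠ u₂ → Disjoint (ψ u₁) (ψ u₂)) :
    (SimpleGraph.fromRel (fun a b => ∃ x ∈ ψ a, ∃ y ∈ ψ b, G.Adj x y)).Connected := by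
  classical
  choose c hc using hcov
  have hcu : ∀ (u : U) (x : V), x ∈ ψ u → c x = u := by
    intro u x hx
    by_contra hne'
    exact (Set.disjoint_left.1 (hdisj _ _ hne') (hc x)) hx
  rw [connected_iff]
  refine ⟨?_, ‹Nonempty U›⟩
  intro a b
  obtain ⟨x, hx⟩ := hne a
  obtain ⟨y, hy⟩ := hne b
  have key : ∀ {p q : V}, G.Walk p q →
      (SimpleGraph.fromRel (fun a b => ∃ x ∈ ψ a, ∃ y ∈ ψ b, G.Adj x y)).Reachable (c p) (c q) := by
    intro p q w
    induction w with
    | nil => exact Reachable.refl _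
    | @cons p m q hadj w ih =>
      by_cases he : c p = c m
      · rw [he]; exact ih
      · refine (SimpleGraph.Adj.reachable ?_).trans ih
        exact (SimpleGraph.fromRel_adj _ _ _).2 ⟨he, Or.inl ⟨p, hc p, m, hc m, hadj⟩⟩
  obtain ⟨w⟩ := hG x y
  have := key w
  rwa [hcu a x hx, hcu b y hy] at this

lemma exists_connected_extension {U V : Type} [Finite V] [Finite U] [Nonempty U]
    {Z : SimpleGraph V} (hZ : Z.Connected) {Y : SimpleGraph U} (hm : Y.IsMinorOf Z) :
    ∃ Y' : SimpleGraph U, Y'.Connected ∧ (∀ a b, Y.Adj a b → Y'.Adj a b) ∧ Y'.IsMinorOf Z := by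
  obtain ⟨φ, h1, h2, h3, h4⟩ := hm
  obtain ⟨ψ, hsub, g1, g2, g3, g4⟩ :=
    grow Z hZ.preconnected (Set.ncard (⋃ u, φ u)ᶜ) φ h1 h2 h3 le_rfl
  have hcov : ∀ x : V, ∃ u, x ∈ ψ u := by
    intro x
    have : x ∈ ⋃ u, ψ u := by rw [g4]; trivial
    exact Set.mem_iUnion.1 this
  refine ⟨SimpleGraph.fromRel (fun a b => ∃ x ∈ ψ a, ∃ y ∈ ψ b, Z.Adj x y), ?_, ?_, ?_⟩
  · exact quotient_connected Z hZ.preconnected ψ g1 hcov g3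
  · intro a b hab
    obtain ⟨x, hx, y, hy, hxy⟩ := h4 a b hab
    exact (SimpleGraph.fromRel_adj _ _ _).2
      ⟨hab.ne, Or.inl ⟨x, hsub a hx, y, hsub b hy, hxy⟩⟩
  · refine ⟨ψ, g1, g2, g3, ?_⟩
    intro a b hab
    rw [SimpleGraph.fromRel_adj] at hab
    rcases hab.2 with ⟨x, hx, y, hy, hxy⟩ | ⟨x, hx, y, hy, hxy⟩
    · exact ⟨x, hx, y, hy, hxy⟩
    · exact ⟨y, hy, x, hx, hxy.symm⟩


lemma exists_obstruction_minor (C : GraphClass) :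
    ∀ (n : ℕ) (V : Type) [Finite V] (G : SimpleGraph V),
      Nat.card V + ecard G ≤ n → ¬ C V G →
      ∃ (U : Type) (_ : Finite U) (Y : SimpleGraph U), Y.IsMinorOf G ∧ IsObstruction C Y := by
  intro n
  induction n using Nat.strong_induction_on with
  | _ n ih =>
    intro V _ G hn hG
    by_cases hobs : ∀ (U : Type) (_ : Finite U) (Y : SimpleGraph U),
        Y.IsMinorOf G → ¬ C U Y → G.IsMinorOf Y
    · exact ⟨V, ‹_›, G, minor_refl G, hG, fun U _ Y hm hnc => hobs U ‹_› Y hm hnc⟩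
    · push_neg at hobs
      obtain ⟨U, iU, Y, hm, hnC, hnrev⟩ := hobs
      haveI := iU
      have h1 : Nat.card U ≤ Nat.card V := minor_card_le hm
      have h2 : ecard Y ≤ ecard G := minor_ecard_le hm
      have hlt : Nat.card U + ecard Y < Nat.card V + ecard G := by
        rcases lt_or_ge (Nat.card U + ecard Y) (Nat.card V + ecard G) with hl | hg
        · exact hl
        · exfalso
          have hv : Nat.card V ≤ Nat.card U := by omega
          have he : ecard G ≤ ecard Y := by omega
          exact hnrev (minor_reverse_of_card hm hv he)
      obtain ⟨U', i', Y', hm', hobs'⟩ :=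
        ih (Nat.card U + ecard Y) (lt_of_lt_of_le hlt hn) U Y le_rfl hnC
      exact ⟨U', i', Y', minor_trans hm' hm, hobs'⟩

lemma subset_closure {C : GraphClass} (hC : MinorClosed C) {V : Type} [Finite V]
    {G : SimpleGraph V} (h : C V G) : ClosureOf C V G := by
  intro J
  exact hC V _ G (G.induce J.supp) (induce_minor G J.supp) h

lemma supp_eq_univ {V : Type} {G : SimpleGraph V} (hG : G.Connected)
    (J : G.ConnectedComponent) : J.supp = Set.univ := by
  obtain ⟨y, rfl⟩ := J.exists_rep
  ext x
  simp only [SimpleGraph.ConnectedComponent.mem_supp_iff, Set.mem_univ, iff_true,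
    SimpleGraph.ConnectedComponent.eq]
  exact (SimpleGraph.ConnectedComponent.eq).2 (hG.preconnected x y)

lemma not_closure_of_connected {C : GraphClass} (hC : MinorClosed C) {V : Type} [Finite V]
    {G : SimpleGraph V} (hconn : G.Connected) (h : ¬ C V G) : ¬ ClosureOf C V G := by
  intro hcl
  haveI : Nonempty V := hconn.nonempty
  obtain ⟨x⟩ := ‹Nonempty V›
  have hJ := hcl (G.connectedComponentMk x)
  exact h (hC _ _ _ G (minor_induce_univ G (supp_eq_univ hconn _)) hJ)

lemma empty_mem {C : GraphClass} (hC : MinorClosed C) (hne : NonemptyClass C)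
    {V : Type} [Finite V] [IsEmpty V] (G : SimpleGraph V) : C V G := by
  obtain ⟨V₀, i₀, G₀, h₀⟩ := hne
  haveI := i₀
  exact hC V₀ V G₀ G (minor_of_isEmpty G G₀) h₀

lemma nonempty_of_notC {C : GraphClass} (hC : MinorClosed C) (hne : NonemptyClass C)
    {V : Type} [Finite V] {G : SimpleGraph V} (h : ¬ C V G) : Nonempty V := by
  by_contra hn
  rw [not_nonempty_iff] at hn
  exact h (empty_mem hC hne G)

lemma obstruction_closure_card_le (h : ℕ) (C : GraphClass) (hMC : MinorClosed C)
    (hNE : NonemptyClass C)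
    (hob : ∀ (W : Type) [Finite W] (Z : SimpleGraph W), IsObstruction C Z → Nat.card W ≤ h)
    {W : Type} [Finite W] {Z : SimpleGraph W} (hconn : Z.Connected)
    (hZ : IsObstruction (ClosureOf C) Z) : Nat.card W ≤ h := by
  have hnC : ¬ C W Z := fun hc => hZ.1 (subset_closure hMC hc)
  obtain ⟨U, iU, Y, hm, hYobs⟩ :=
    exists_obstruction_minor C (Nat.card W + ecard Z) W Z le_rfl hnC
  haveI := iU
  haveI : Nonempty U := nonempty_of_notC hMC hNE hYobs.1
  obtain ⟨Y', hY'conn, hY'sub, hY'm⟩ := exists_connected_extension hconn hm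
  have hnCY' : ¬ C U Y' := fun hc => hYobs.1 (hMC U U Y' Y (spanning_minor hY'sub) hc)
  have hncl : ¬ ClosureOf C U Y' := not_closure_of_connected hMC hY'conn hnCY'
  have hrev : Z.IsMinorOf Y' := hZ.2 U Y' hY'm hncl
  calc Nat.card W ≤ Nat.card U := minor_card_le hrev
    _ ≤ h := hob U Y hYobs


lemma exists_embedding_fin {W : Type} [Finite W] {h : ℕ} (hcard : Nat.card W ≤ h) :
    Nonempty (W ↪ Fin h) := by
  haveI := Fintype.ofFinite W
  rw [Function.Embedding.nonempty_iff_card_le]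
  calc Fintype.card W = Nat.card W := (Nat.card_eq_fintype_card).symm
    _ ≤ h := hcard
    _ = Fintype.card (Fin h) := (Fintype.card_fin h).symm

lemma rooted_iso_of_code_eq {W₁ W₂ : Type} {Z₁ : SimpleGraph W₁} {Z₂ : SimpleGraph W₂}
    {v₁ u₁ : W₁} {v₂ u₂ : W₂} {h : ℕ} {e₁ : W₁ ↪ Fin h} {e₂ : W₂ ↪ Fin h}
    (hrange : Set.range e₁ = Set.range e₂)
    (hgraph : SimpleGraph.map e₁ Z₁ = SimpleGraph.map e₂ Z₂)
    (hv : e₁ v₁ = e₂ v₂) (hu : e₁ u₁ = e₂ u₂) :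
    ∃ g : W₁ → W₂, Function.Bijective g ∧ (∀ a b, Z₁.Adj a b ↔ Z₂.Adj (g a) (g b)) ∧
      g v₁ = v₂ ∧ g u₁ = u₂ := by
  have hg : ∀ a : W₁, ∃ b : W₂, e₂ b = e₁ a := by
    intro a
    have : e₁ a ∈ Set.range e₂ := hrange ▸ Set.mem_range_self a
    exact this
  have hg' : ∀ b : W₂, ∃ a : W₁, e₁ a = e₂ b := by
    intro b
    have : e₂ b ∈ Set.range e₁ := hrange.symm ▸ Set.mem_range_self b
    exact this
  choose g hgspec using hg
  choose g' hg'spec using hg'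
  have hbij : Function.Bijective g := by
    constructor
    · intro a b hab
      apply e₁.injective
      rw [← hgspec a, ← hgspec b, hab]
    · intro b
      refine ⟨g' b, e₂.injective ?_⟩
      rw [hgspec (g' b), hg'spec b]
  have hadj : ∀ a b, Z₁.Adj a b ↔ Z₂.Adj (g a) (g b) := by
    intro a b
    constructor
    · intro hab
      have h1 : (SimpleGraph.map e₁ Z₁).Adj (e₁ a) (e₁ b) :=
        (SimpleGraph.map_adj e₁ Z₁ _ _).2 ⟨a, b, hab, rfl, rfl⟩
      rw [hgraph] at h1
      obtain ⟨a', b', hab', ha', hb'⟩ := (SimpleGraph.map_adj e₂ Z₂ _ _).1 h1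
      have ha2 : a' = g a := e₂.injective (by rw [ha', hgspec])
      have hb2 : b' = g b := e₂.injective (by rw [hb', hgspec])
      rwa [ha2, hb2] at hab'
    · intro hab
      have h1 : (SimpleGraph.map e₂ Z₂).Adj (e₂ (g a)) (e₂ (g b)) :=
        (SimpleGraph.map_adj e₂ Z₂ _ _).2 ⟨g a, g b, hab, rfl, rfl⟩
      rw [← hgraph, hgspec, hgspec] at h1
      obtain ⟨a', b', hab', ha', hb'⟩ := (SimpleGraph.map_adj e₁ Z₁ _ _).1 h1
      have ha2 : a' = a := e₁.injective ha'
      have hb2 : b' = b := e₁.injective hb'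
      rwa [ha2, hb2] at hab'
  refine ⟨g, hbij, hadj, ?_, ?_⟩
  · exact e₂.injective (by rw [hgspec, hv])
  · exact e₂.injective (by rw [hgspec, hu])



section Chain

variable {s : ℕ} {W : Fin s → Type} (Z : ∀ i, SimpleGraph (W i)) (v u : ∀ i, W i)

lemma sigma_mk_ne_of_fst {i j : Fin s} {x : W i} {y : W j} (hij : i ≠ j) :
    (⟨i, x⟩ : Σ i, W i) ≠ ⟨j, y⟩ := by
  intro hq
  exact hij (congrArg Sigma.fst hq)

lemma sigma_mk_ne_of_snd {i : Fin s} {x y : W i} (hxy : x ≠ y) :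
    (⟨i, x⟩ : Σ i, W i) ≠ ⟨i, y⟩ := by
  intro hq
  apply hxy
  have := Sigma.mk.inj_iff.1 hq
  exact eq_of_heq this.2

lemma chain_adj_within {i : Fin s} {x y : W i} (hxy : (Z i).Adj x y) :
    (chainGraph Z v u).Adj ⟨i, x⟩ ⟨i, y⟩ := by
  refine (SimpleGraph.fromRel_adj _ _ _).2 ⟨sigma_mk_ne_of_snd hxy.ne, Or.inl ?_⟩
  exact Or.inl ⟨i, x, y, hxy, rfl, rfl⟩

lemma chain_adj_cross {i j : Fin s} (hij : (i : ℕ) + 1 = (j : ℕ)) :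
    (chainGraph Z v u).Adj ⟨i, u i⟩ ⟨j, v j⟩ := by
  have hne : i ≠ j := by
    intro hq
    subst hq
    omega
  refine (SimpleGraph.fromRel_adj _ _ _).2 ⟨sigma_mk_ne_of_fst hne, Or.inl ?_⟩
  exact Or.inr ⟨i, j, hij, rfl, rfl⟩

lemma chain_adj_iff (a b : Σ i, W i) :
    (chainGraph Z v u).Adj a b ↔ a ≠ b ∧
      (((∃ i x y, (Z i).Adj x y ∧ a = ⟨i, x⟩ ∧ b = ⟨i, y⟩) ∨
        ∃ i j : Fin s, (i : ℕ) + 1 = (j : ℕ) ∧ a = ⟨i, u i⟩ ∧ b = ⟨j, v j⟩) ∨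
       ((∃ i x y, (Z i).Adj x y ∧ b = ⟨i, x⟩ ∧ a = ⟨i, y⟩) ∨
        ∃ i j : Fin s, (i : ℕ) + 1 = (j : ℕ) ∧ b = ⟨i, u i⟩ ∧ a = ⟨j, v j⟩)) :=
  SimpleGraph.fromRel_adj _ a b

lemma chain_copy_preconnected {j : Fin s} (hc : (Z j).Connected) :
    ((chainGraph Z v u).induce {p : Σ i, W i | p.1 = j}).Preconnected := by
  rintro ⟨⟨i, x⟩, hi⟩ ⟨⟨i', y⟩, hi'⟩
  simp only [Set.mem_setOf_eq] at hi hi'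
  subst hi; subst hi'
  exact (hc.preconnected x y).map
    (⟨fun z => ⟨⟨i', z⟩, rfl⟩, fun {a b} hab => chain_adj_within Z v u hab⟩ :
      Z i' →g (chainGraph Z v u).induce {p : Σ i, W i | p.1 = i'})

lemma chain_piece_connected (hz : ∀ i, (Z i).Connected) (a : Fin s) (c : ℕ) (hcs : c ≤ s) :
    ((chainGraph Z v u).induce
      ({(⟨a, u a⟩ : Σ i, W i)} ∪
        {p : Σ i, W i | (a : ℕ) < (p.1 : ℕ) ∧ (p.1 : ℕ) < c})).Connected := by
  classical
  rw [SimpleGraph.connected_iff]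
  refine ⟨?_, ⟨⟨⟨a, u a⟩, Or.inl rfl⟩⟩⟩
  have main : ∀ S : ℕ → Set (Σ i, W i),
      S = (fun j => if (a : ℕ) < j ∧ j < c then {p : Σ i, W i | (p.1 : ℕ) = j}
        else {(⟨a, u a⟩ : Σ i, W i)}) →
      ((chainGraph Z v u).induce
        ({(⟨a, u a⟩ : Σ i, W i)} ∪
          {p : Σ i, W i | (a : ℕ) < (p.1 : ℕ) ∧ (p.1 : ℕ) < c})).Preconnected := by
    intro S hSdef
    have hval : ∀ j, S j = if (a : ℕ) < j ∧ j < c then {p : Σ i, W i | (p.1 : ℕ) = j}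
        else {(⟨a, u a⟩ : Σ i, W i)} := fun j => by rw [hSdef]
    set T : Set (Σ i, W i) :=
      {(⟨a, u a⟩ : Σ i, W i)} ∪ {p : Σ i, W i | (a : ℕ) < (p.1 : ℕ) ∧ (p.1 : ℕ) < c} with hTdef
    have hsub : ∀ j, S j ⊆ T := by
      intro j
      rw [hval j]
      by_cases hj : (a : ℕ) < j ∧ j < c
      · rw [if_pos hj]
        intro p hp
        exact Or.inr ⟨by rw [hp]; exact hj.1, by rw [hp]; exact hj.2⟩
      · rw [if_neg hj]
        intro p hp
        exact Or.inl hp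
    have hconn : ∀ j, ((chainGraph Z v u).induce (S j)).Preconnected := by
      intro j
      rw [hval j]
      by_cases hj : (a : ℕ) < j ∧ j < c
      · rw [if_pos hj]
        have hjs : j < s := lt_of_lt_of_le hj.2 hcs
        have hset : {p : Σ i, W i | (p.1 : ℕ) = j} = {p : Σ i, W i | p.1 = (⟨j, hjs⟩ : Fin s)} := by
          ext p
          simp [Fin.ext_iff]
        rw [hset]
        exact chain_copy_preconnected Z v u (hz ⟨j, hjs⟩)
      · rw [if_neg hj]
        exact (connected_induce_singleton _ _).preconnected
    have hcross1 : ∀ i j : ℕ, ((a : ℕ) ≤ i ∧ i + 1 = j ∧ j < c) →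
        ∃ x ∈ S i, ∃ y ∈ S j, (chainGraph Z v u).Adj x y := by
      rintro i j ⟨hai, hij, hjc⟩
      have hjs : j < s := lt_of_lt_of_le hjc hcs
      have hSj : (⟨⟨j, hjs⟩, v ⟨j, hjs⟩⟩ : Σ i, W i) ∈ S j := by
        rw [hval j, if_pos ⟨by omega, hjc⟩]
        exact rfl
      by_cases hia : (a : ℕ) < i
      · have his : i < s := by omega
        have hSi : (⟨⟨i, his⟩, u ⟨i, his⟩⟩ : Σ i, W i) ∈ S i := by
          rw [hval i, if_pos ⟨hia, by omega⟩]
          exact rfl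
        exact ⟨_, hSi, _, hSj, chain_adj_cross Z v u hij⟩
      · have hSi : (⟨a, u a⟩ : Σ i, W i) ∈ S i := by
          rw [hval i, if_neg (by omega)]
          exact rfl
        have hav : (a : ℕ) = i := by omega
        exact ⟨_, hSi, _, hSj, chain_adj_cross Z v u (by simp only []; omega)⟩
    have hcross : ∀ i j, (SimpleGraph.fromRel
        (fun i j : ℕ => (a : ℕ) ≤ i ∧ i + 1 = j ∧ j < c)).Adj i j →
        ∃ x ∈ S i, ∃ y ∈ S j, (chainGraph Z v u).Adj x y := by
      intro i j hK
      rw [SimpleGraph.fromRel_adj] at hK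
      rcases hK.2 with hr | hr
      · exact hcross1 i j hr
      · obtain ⟨x, hx, y, hy, hxy⟩ := hcross1 j i hr
        exact ⟨y, hy, x, hx, hxy.symm⟩
    have walkTo : ∀ j : ℕ, (a : ℕ) ≤ j → j < c →
        (SimpleGraph.fromRel (fun i j : ℕ => (a : ℕ) ≤ i ∧ i + 1 = j ∧ j < c)).Reachable (a : ℕ) j := by
      intro j haj
      induction j, haj using Nat.le_induction with
      | base => intro _; exact SimpleGraph.Reachable.refl _
      | succ n hn ihn =>
        intro hnc
        have hn2 : n < c := by omega
        refine (ihn hn2).trans (SimpleGraph.Adj.reachable ?_)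
        exact (SimpleGraph.fromRel_adj _ _ _).2 ⟨by omega, Or.inl ⟨hn, rfl, hnc⟩⟩
    have toRoot : ∀ (p : Σ i, W i) (hp : p ∈ T),
        ((chainGraph Z v u).induce T).Reachable ⟨p, hp⟩ ⟨⟨a, u a⟩, Or.inl rfl⟩ := by
      intro p hp
      rcases hp with hp | hp
      · rcases hp with rfl
        exact SimpleGraph.Reachable.refl _
      · have hpS : p ∈ S ((p.1 : ℕ)) := by
          rw [hval, if_pos ⟨hp.1, hp.2⟩]
          exact rfl
        have hrootS : (⟨a, u a⟩ : Σ i, W i) ∈ S ((a : ℕ)) := by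
          rw [hval, if_neg (by omega)]
          exact rfl
        obtain ⟨w⟩ := (walkTo (p.1 : ℕ) (le_of_lt hp.1) hp.2).symm
        exact reachable_induce_of_iUnion (chainGraph Z v u) S T hsub hconn _ hcross w
          p hpS (⟨a, u a⟩ : Σ i, W i) hrootS
    intro p q
    obtain ⟨p, hp⟩ := p
    obtain ⟨q, hq⟩ := q
    exact (toRoot p hp).trans (toRoot q hq).symm
  exact main _ rfl

end Chain

end ObsAux


open ObsAux in
/-- **Observation 12.10.** There is a function `f : ℕ → ℕ` such that for every `h`,
every nonempty proper minor-closed class `C` all of whose obstructions have at most `h`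
vertices, and every `t ≥ 1`: every `C`-chain of size at least `t · f h` contains, as a
minor, the `𝐙`-chain of size `t` for some `2`-rooted graph `𝐙 = (Z₀, v₀, u₀)` with
`Z₀ ∈ obs(C^(c))`. -/
theorem chain_contains_uniform_chain :
    ∃ f : ℕ → ℕ, ∀ (h : ℕ) (C : GraphClass),
      MinorClosed C → ProperClass C → NonemptyClass C →
      (∀ (W : Type) [Finite W] (Z : SimpleGraph W), IsObstruction C Z → Nat.card W ≤ h) →
      ∀ t : ℕ, 1 ≤ t → ∀ s : ℕ, t * f h ≤ s →
        ∀ (W : Fin s → Type) (_ : ∀ i, Finite (W i)) (Z : ∀ i, SimpleGraph (W i))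
          (v u : ∀ i, W i),
          (∀ i, (Z i).Connected ∧ IsObstruction (ClosureOf C) (Z i)) →
          ∃ (W₀ : Type) (_ : Finite W₀) (Z₀ : SimpleGraph W₀) (v₀ u₀ : W₀),
            Z₀.Connected ∧ IsObstruction (ClosureOf C) Z₀ ∧
            (chainGraph (fun _ : Fin t => Z₀) (fun _ => v₀) (fun _ => u₀)).IsMinorOf
              (chainGraph Z v u) := by
  classical
  refine ⟨fun h => Nat.card (Set (Fin h) × SimpleGraph (Fin h) × Fin h × Fin h) + 1, ?_⟩
  intro h C hMC hPC hNE hob t ht s hs W fin Z v u hZ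
  have hz' : ∀ i, (Z i).Connected := fun i => (hZ i).1
  -- size bound and embeddings
  have hcard : ∀ i, Nat.card (W i) ≤ h := by
    intro i
    haveI := fin i
    exact obstruction_closure_card_le h C hMC hNE hob (hZ i).1 (hZ i).2
  have he : ∀ i, Nonempty (W i ↪ Fin h) := by
    intro i
    haveI := fin i
    exact exists_embedding_fin (hcard i)
  have e : ∀ i, W i ↪ Fin h := fun i => (he i).some
  -- pigeonhole
  haveI : Fintype (Set (Fin h) × SimpleGraph (Fin h) × Fin h × Fin h) := Fintype.ofFinite _
  have hNcard : Fintype.card (Set (Fin h) × SimpleGraph (Fin h) × Fin h × Fin h)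
      = Nat.card (Set (Fin h) × SimpleGraph (Fin h) × Fin h × Fin h) :=
    (Nat.card_eq_fintype_card).symm
  have hlt : Fintype.card (Set (Fin h) × SimpleGraph (Fin h) × Fin h × Fin h) * (t - 1)
      < Fintype.card (Fin s) := by
    rw [Fintype.card_fin, hNcard]
    set N := Nat.card (Set (Fin h) × SimpleGraph (Fin h) × Fin h × Fin h) with hN
    calc N * (t - 1) ≤ N * t := Nat.mul_le_mul_left N (by omega)
      _ < N * t + t := by omega
      _ = t * (N + 1) := by ring
      _ ≤ s := hs
  obtain ⟨y, hy⟩ := Fintype.exists_lt_card_fiber_of_mul_lt_card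
    (fun i : Fin s => ((Set.range (e i), SimpleGraph.map (e i) (Z i), e i (v i), e i (u i)) :
      Set (Fin h) × SimpleGraph (Fin h) × Fin h × Fin h)) hlt
  obtain ⟨B, hBsub, hBcard⟩ := Finset.exists_subset_card_eq (Nat.le_of_pred_lt hy)
  have m0 := B.orderIsoOfFin hBcard
  let mm : Fin t → Fin s := fun k => (m0 k).val
  have hmmdef : ∀ k, mm k = (m0 k).val := fun k => rfl
  have mm_lt : ∀ {k l : Fin t}, (k : ℕ) < (l : ℕ) → ((mm k : Fin s) : ℕ) < ((mm l) : ℕ) := by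
    intro k l hkl
    have h1 : k < l := hkl
    have h2 : m0 k < m0 l := (OrderIso.lt_iff_lt m0).2 h1
    have h3 : (m0 k).val < (m0 l).val := h2
    exact h3
  have mm_inj : ∀ {k l : Fin t}, mm k = mm l → k = l := by
    intro k l hkl
    by_contra hne
    rcases Nat.lt_or_ge (k : ℕ) (l : ℕ) with hc | hc
    · exact absurd (congrArg Fin.val hkl) (Nat.ne_of_lt (mm_lt hc))
    · have : (l : ℕ) < (k : ℕ) := by
        rcases Nat.lt_or_ge (l : ℕ) (k : ℕ) with hc2 | hc2
        · exact hc2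
        · exact absurd (Fin.ext (by omega)) hne
      exact absurd (congrArg Fin.val hkl).symm (Nat.ne_of_lt (mm_lt this))
  have hcode : ∀ k : Fin t,
      ((Set.range (e (mm k)), SimpleGraph.map (e (mm k)) (Z (mm k)), e (mm k) (v (mm k)),
        e (mm k) (u (mm k))) :
        Set (Fin h) × SimpleGraph (Fin h) × Fin h × Fin h) = y := by
    intro k
    have hmem : (m0 k).val ∈ B := (m0 k).2
    have := hBsub hmem
    exact (Finset.mem_filter.1 this).2
  -- the base copy
  have htpos : 0 < t := ht
  set k0 : Fin t := ⟨0, htpos⟩ with hk0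
  set i0 : Fin s := mm k0 with hi0
  haveI : Finite (W i0) := fin i0
  -- rooted isomorphisms
  have hiso : ∀ k : Fin t, ∃ g : W i0 → W (mm k), Function.Bijective g ∧
      (∀ a b, (Z i0).Adj a b ↔ (Z (mm k)).Adj (g a) (g b)) ∧
      g (v i0) = v (mm k) ∧ g (u i0) = u (mm k) := by
    intro k
    have hce := (hcode k0).trans (hcode k).symm
    rw [Prod.mk.injEq, Prod.mk.injEq, Prod.mk.injEq] at hce
    obtain ⟨hr, hg, ha, hb⟩ := hce
    exact rooted_iso_of_code_eq hr hg ha hb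
  choose g hgbij hgadj hgv hgu using hiso
  -- successor positions
  let nxtv : Fin t → ℕ :=
    fun k => if hk : (k : ℕ) + 1 < t then ((mm ⟨(k : ℕ) + 1, hk⟩ : Fin s) : ℕ)
      else ((mm k : Fin s) : ℕ)
  have hnxt_pos : ∀ (k : Fin t) (hk : (k : ℕ) + 1 < t),
      nxtv k = ((mm ⟨(k : ℕ) + 1, hk⟩ : Fin s) : ℕ) := fun k hk => dif_pos hk
  have hnxt_neg : ∀ (k : Fin t), ¬ ((k : ℕ) + 1 < t) →
      nxtv k = ((mm k : Fin s) : ℕ) := fun k hk => dif_neg hk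
  have mm_lt_reflect : ∀ {k l : Fin t}, ((mm k : Fin s) : ℕ) < ((mm l : Fin s) : ℕ) →
      (k : ℕ) < (l : ℕ) := by
    intro k l hkl
    by_contra hc
    rcases Nat.lt_or_ge (l : ℕ) (k : ℕ) with hc2 | hc2
    · have := mm_lt hc2; omega
    · have : k = l := Fin.ext (by omega)
      rw [this] at hkl; omega
  have hnxt_le : ∀ {k l : Fin t}, (k : ℕ) < (l : ℕ) → nxtv k ≤ ((mm l : Fin s) : ℕ) := by
    intro k l hkl
    have hk : (k : ℕ) + 1 < t := lt_of_le_of_lt (Nat.succ_le_of_lt hkl) l.isLt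
    rw [hnxt_pos k hk]
    rcases Nat.lt_or_ge (((⟨(k : ℕ) + 1, hk⟩ : Fin t)) : ℕ) (l : ℕ) with hc | hc
    · exact le_of_lt (mm_lt hc)
    · have hEq : (⟨(k : ℕ) + 1, hk⟩ : Fin t) = l := Fin.ext (by simp at hc ⊢; omega)
      rw [hEq]
  have hnxt_lt_s : ∀ k, nxtv k ≤ s := by
    intro k
    by_cases hk : (k : ℕ) + 1 < t
    · rw [hnxt_pos k hk]; exact le_of_lt (Fin.is_lt _)
    · rw [hnxt_neg k hk]; exact le_of_lt (Fin.is_lt _)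
  refine ⟨W i0, fin i0, Z i0, v i0, u i0, (hZ i0).1, (hZ i0).2, ?_⟩
  -- the minor model
  let φ : (Σ _ : Fin t, W i0) → Set (Σ i, W i) := fun q =>
    {(⟨mm q.1, g q.1 q.2⟩ : Σ i, W i)} ∪
      {p : Σ i, W i | q.2 = u i0 ∧ ((mm q.1 : Fin s) : ℕ) < (p.1 : ℕ) ∧ (p.1 : ℕ) < nxtv q.1}
  have hφval : ∀ q : Σ _ : Fin t, W i0, φ q =
      {(⟨mm q.1, g q.1 q.2⟩ : Σ i, W i)} ∪
        {p : Σ i, W i | q.2 = u i0 ∧ ((mm q.1 : Fin s) : ℕ) < (p.1 : ℕ) ∧ (p.1 : ℕ) < nxtv q.1} :=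
    fun q => rfl
  refine ⟨φ, ?_, ?_, ?_, ?_⟩
  · intro q
    exact ⟨⟨mm q.1, g q.1 q.2⟩, Or.inl rfl⟩
  · rintro ⟨k, x⟩
    by_cases hx : x = u i0
    · subst hx
      have hset : φ ⟨k, u i0⟩ =
          ({(⟨mm k, u (mm k)⟩ : Σ i, W i)} ∪
            {p : Σ i, W i | ((mm k : Fin s) : ℕ) < (p.1 : ℕ) ∧ (p.1 : ℕ) < nxtv k}) := by
        rw [hφval]
        rw [show g k (u i0) = u (mm k) from hgu k]
        ext p
        simp
      rw [hset]
      exact chain_piece_connected Z v u hz' (mm k) (nxtv k) (hnxt_lt_s k)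
    · have hset : φ ⟨k, x⟩ = {(⟨mm k, g k x⟩ : Σ i, W i)} := by
        rw [hφval]
        ext p
        simp [hx]
      rw [hset]
      exact connected_induce_singleton _ _
  · rintro ⟨k, x⟩ ⟨l, x'⟩ hne
    rw [Set.disjoint_left]
    intro p hp hq
    rw [hφval] at hp hq
    simp only [Set.mem_union, Set.mem_singleton_iff, Set.mem_setOf_eq] at hp hq
    rcases hp with hp | hp <;> rcases hq with hq | hq
    · rw [hp] at hq
      have h1 : mm k = mm l := congrArg Sigma.fst hq
      have h2 : k = l := mm_inj h1
      subst h2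
      have h3 : g k x = g k x' := eq_of_heq (Sigma.mk.inj_iff.1 hq).2
      exact hne (by rw [(hgbij k).1 h3])
    · -- p is the k-th singleton, inside the between-zone of l
      obtain ⟨hx', hlo, hhi⟩ := hq
      rw [hp] at hlo hhi
      simp only at hlo hhi
      have hlk : (l : ℕ) < (k : ℕ) := mm_lt_reflect hlo
      have := hnxt_le hlk
      omega
    · obtain ⟨hx, hlo, hhi⟩ := hp
      rw [hq] at hlo hhi
      simp only at hlo hhi
      have hkl : (k : ℕ) < (l : ℕ) := mm_lt_reflect hlo
      have := hnxt_le hkl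
      omega
    · obtain ⟨hx, hlo, hhi⟩ := hp
      obtain ⟨hx', hlo', hhi'⟩ := hq
      have hkl : k ≠ l := by
        intro hEq
        subst hEq
        subst hx; subst hx'
        exact hne rfl
      rcases Nat.lt_or_ge (k : ℕ) (l : ℕ) with hc | hc
      · have := hnxt_le hc; omega
      · have hc2 : (l : ℕ) < (k : ℕ) := by
          rcases Nat.lt_or_ge (l : ℕ) (k : ℕ) with hc2 | hc2
          · exact hc2
          · exact absurd (Fin.ext (by omega)) hkl
        have := hnxt_le hc2; omega
  · intro q₁ q₂ hadj
    rw [chain_adj_iff] at hadj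
    obtain ⟨hne, hR⟩ := hadj
    have key : ∀ (q₁ q₂ : Σ _ : Fin t, W i0), q₁ ≠ q₂ →
        ((∃ (i : Fin t) (x y : W i0), (Z i0).Adj x y ∧ q₁ = ⟨i, x⟩ ∧ q₂ = ⟨i, y⟩) ∨
          ∃ i j : Fin t, (i : ℕ) + 1 = (j : ℕ) ∧ q₁ = ⟨i, u i0⟩ ∧ q₂ = ⟨j, v i0⟩) →
        ∃ p₁ ∈ φ q₁, ∃ p₂ ∈ φ q₂, (chainGraph Z v u).Adj p₁ p₂ := by
      rintro q₁ q₂ hne (⟨i, x, y, hxy, rfl, rfl⟩ | ⟨i, j, hij, rfl, rfl⟩)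
      · refine ⟨⟨mm i, g i x⟩, Or.inl rfl, ⟨mm i, g i y⟩, Or.inl rfl, ?_⟩
        exact chain_adj_within Z v u ((hgadj i x y).1 hxy)
      · have hk : (i : ℕ) + 1 < t := by have := j.isLt; omega
        have hnx : nxtv i = ((mm j : Fin s) : ℕ) := by
          rw [hnxt_pos i hk]
          have hEq : (⟨(i : ℕ) + 1, hk⟩ : Fin t) = j := Fin.ext hij
          rw [hEq]
        by_cases hstep : ((mm i : Fin s) : ℕ) + 1 = ((mm j : Fin s) : ℕ)
        · refine ⟨⟨mm i, g i (u i0)⟩, Or.inl rfl, ⟨mm j, g j (v i0)⟩, Or.inl rfl, ?_⟩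
          rw [show g i (u i0) = u (mm i) from hgu i, show g j (v i0) = v (mm j) from hgv j]
          exact chain_adj_cross Z v u hstep
        · have hlt2 : ((mm i : Fin s) : ℕ) < ((mm j : Fin s) : ℕ) := mm_lt (by omega)
          have hj0lt : ((mm j : Fin s) : ℕ) - 1 < s := by
            have := (mm j : Fin s).isLt; omega
          refine ⟨⟨⟨((mm j : Fin s) : ℕ) - 1, hj0lt⟩, u ⟨((mm j : Fin s) : ℕ) - 1, hj0lt⟩⟩,
            Or.inr ⟨rfl, by simp; omega, by rw [hnx]; simp; omega⟩,
            ⟨mm j, g j (v i0)⟩, Or.inl rfl, ?_⟩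
          rw [show g j (v i0) = v (mm j) from hgv j]
          exact chain_adj_cross Z v u (by simp; omega)
    rcases hR with hR | hR
    · exact key q₁ q₂ hne hR
    · obtain ⟨p₂, hp₂, p₁, hp₁, hedge⟩ := key q₂ q₁ (Ne.symm hne) hR
      exact ⟨p₁, hp₁, p₂, hp₂, hedge.symm⟩
end

section
/- Let H be a nonempty proper minor-closed graph class, let Z ∈ obs(H^{(c)}), and let 𝐙 = (Z, v, u) be a 2-rooted graph with underlying graph Z. Then there is a constant c > 0 such that for every integer t ≥ 1, H-td(E_t^𝐙) ≥ c · log t, i.e., the elimination distance to H of the 𝐙-chain of size t is Ω(log t). (Observation 12.11) -/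
open SimpleGraph

set_option autoImplicit false

/-- `ElimLE C V G k` holds iff the elimination distance of `G` to the class `C`
(`C`-tree-depth) is at most `k`, following the standard recursion: graphs in `C` have
distance `0`; for a connected graph one may delete a vertex at cost `1`; for a
disconnected graph one recurses into the components. -/
inductive ElimLE (C : GraphClass) : ∀ (V : Type), SimpleGraph V → ℕ → Prop where
  | base (V : Type) [Finite V] (G : SimpleGraph V) (k : ℕ) : C V G → ElimLE C V G k
  | delete (V : Type) (G : SimpleGraph V) (k : ℕ) (v : V) :
      G.Connected → ElimLE C ↥(({v} : Set V)ᶜ) (G.induce (({v} : Set V)ᶜ)) k →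
      ElimLE C V G (k + 1)
  | comp (V : Type) (G : SimpleGraph V) (k : ℕ) :
      (∀ J : G.ConnectedComponent, ElimLE C ↥(J.supp) (G.induce J.supp) k) →
      ElimLE C V G k
section Aux
variable {V : Type} {G : SimpleGraph V}

private lemma induce_singleton_connected (G : SimpleGraph V) (x : V) :
    (G.induce {x}).Connected := by
  rw [connected_iff]
  exact ⟨fun a b => by rw [Subsingleton.elim a b], ⟨⟨x, rfl⟩⟩⟩

private lemma reach_in_set {A : Set V} (hA : (G.induce A).Connected) {a b : V}
    (ha : a ∈ A) (hb : b ∈ A) : G.Reachable a b :=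
  (hA.preconnected ⟨a, ha⟩ ⟨b, hb⟩).map (SimpleGraph.Embedding.induce A).toHom

private def doubleInduceIso (G : SimpleGraph V) {S A : Set V} (h : A ⊆ S) :
    ((G.induce S).induce (Subtype.val ⁻¹' A : Set S)) ≃g (G.induce A) where
  toFun := fun a => ⟨a.1.1, a.2⟩
  invFun := fun a => ⟨⟨a.1, h a.2⟩, a.2⟩
  left_inv := fun a => rfl
  right_inv := fun a => rfl
  map_rel_iff' := Iff.rfl

private lemma minor_transfer {Wt : Type} {H : SimpleGraph Wt} {S : Set V}
    (φ : Wt → Set V)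
    (hsub : ∀ w, φ w ⊆ S)
    (h1 : ∀ w, (φ w).Nonempty)
    (h2 : ∀ w, (G.induce (φ w)).Connected)
    (h3 : ∀ w₁ w₂, w₁ ≠ w₂ → Disjoint (φ w₁) (φ w₂))
    (h4 : ∀ w₁ w₂, H.Adj w₁ w₂ → ∃ v₁ ∈ φ w₁, ∃ v₂ ∈ φ w₂, G.Adj v₁ v₂) :
    H.IsMinorOf (G.induce S) := by
  refine ⟨fun w => Subtype.val ⁻¹' φ w, ?_, ?_, ?_, ?_⟩
  · intro w; obtain ⟨x, hx⟩ := h1 w; exact ⟨⟨x, hsub w hx⟩, hx⟩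
  · intro w; exact ((doubleInduceIso G (hsub w)).connected_iff).2 (h2 w)
  · intro w₁ w₂ hne; exact (h3 w₁ w₂ hne).preimage _
  · intro w₁ w₂ ha
    obtain ⟨v₁, hv₁, v₂, hv₂, hadj⟩ := h4 w₁ w₂ ha
    exact ⟨⟨v₁, hsub _ hv₁⟩, hv₁, ⟨v₂, hsub _ hv₂⟩, hv₂, hadj⟩

private lemma isMinorOf_refl (G : SimpleGraph V) : G.IsMinorOf G := by
  refine ⟨fun w => {w}, fun w => ⟨w, rfl⟩, fun w => induce_singleton_connected G w, ?_, ?_⟩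
  · intro w₁ w₂ hne; exact Set.disjoint_singleton.2 hne
  · intro w₁ w₂ h; exact ⟨w₁, rfl, w₂, rfl, h⟩

private lemma induce_isMinorOf (G : SimpleGraph V) (s : Set V) :
    (G.induce s).IsMinorOf G := by
  refine ⟨fun w => {w.1}, fun w => ⟨w.1, rfl⟩, fun w => induce_singleton_connected G w.1, ?_, ?_⟩
  · intro w₁ w₂ hne
    exact Set.disjoint_singleton.2 (fun h => hne (Subtype.ext h))
  · intro w₁ w₂ h; exact ⟨w₁.1, rfl, w₂.1, rfl, h⟩

variable {W : Type} {Z : SimpleGraph W} {v u : W}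

private lemma sigma_eq_iff {t : ℕ} {a b : Fin t} {x y : W} :
    (⟨a, x⟩ : (_ : Fin t) × W) = ⟨b, y⟩ ↔ a = b ∧ x = y := by
  constructor
  · intro h
    injection h with h1 h2
    exact ⟨h1, h2⟩
  · rintro ⟨rfl, rfl⟩; rfl

private lemma chain_adj_iff {t : ℕ} (Z : SimpleGraph W) (v u : W)
    (a b : (_ : Fin t) × W) :
    (chainGraph (fun _ : Fin t => Z) (fun _ => v) (fun _ => u)).Adj a b ↔
      (a.1 = b.1 ∧ Z.Adj a.2 b.2) ∨
      ((a.1 : ℕ) + 1 = (b.1 : ℕ) ∧ a.2 = u ∧ b.2 = v) ∨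
      ((b.1 : ℕ) + 1 = (a.1 : ℕ) ∧ b.2 = u ∧ a.2 = v) := by
  obtain ⟨ai, ax⟩ := a
  obtain ⟨bi, bx⟩ := b
  simp only [chainGraph, fromRel_adj]
  constructor
  · rintro ⟨hne, (⟨i, x, y, hZ, h5, h6⟩ | ⟨i, j, hij, h5, h6⟩) |
      (⟨i, x, y, hZ, h5, h6⟩ | ⟨i, j, hij, h5, h6⟩)⟩
    · obtain ⟨rfl, rfl⟩ := sigma_eq_iff.mp h5
      obtain ⟨rfl, rfl⟩ := sigma_eq_iff.mp h6
      exact Or.inl ⟨rfl, hZ⟩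
    · obtain ⟨rfl, rfl⟩ := sigma_eq_iff.mp h5
      obtain ⟨rfl, rfl⟩ := sigma_eq_iff.mp h6
      exact Or.inr (Or.inl ⟨hij, rfl, rfl⟩)
    · obtain ⟨rfl, rfl⟩ := sigma_eq_iff.mp h6
      obtain ⟨rfl, rfl⟩ := sigma_eq_iff.mp h5
      exact Or.inl ⟨rfl, hZ.symm⟩
    · obtain ⟨rfl, rfl⟩ := sigma_eq_iff.mp h6
      obtain ⟨rfl, rfl⟩ := sigma_eq_iff.mp h5
      exact Or.inr (Or.inr ⟨hij, rfl, rfl⟩)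
  · rintro (⟨h1, h2⟩ | ⟨h1, rfl, rfl⟩ | ⟨h1, rfl, rfl⟩)
    · obtain rfl : ai = bi := h1
      refine ⟨fun h => h2.ne (sigma_eq_iff.mp h).2, ?_⟩
      exact Or.inl (Or.inl ⟨ai, ax, bx, h2, rfl, rfl⟩)
    · refine ⟨fun h => ?_, Or.inl (Or.inr ⟨ai, bi, h1, rfl, rfl⟩)⟩
      have := congrArg (fun i : Fin t => (i : ℕ)) (sigma_eq_iff.mp h).1
      omega
    · refine ⟨fun h => ?_, Or.inr (Or.inr ⟨bi, ai, h1, rfl, rfl⟩)⟩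
      have := congrArg (fun i : Fin t => (i : ℕ)) (sigma_eq_iff.mp h).1
      omega


private lemma chain_adj_within {t : ℕ} (Z : SimpleGraph W) (v u : W) (i : Fin t)
    {x y : W} (h : Z.Adj x y) :
    (chainGraph (fun _ : Fin t => Z) (fun _ => v) (fun _ => u)).Adj ⟨i, x⟩ ⟨i, y⟩ :=
  (chain_adj_iff Z v u _ _).2 (Or.inl ⟨rfl, h⟩)

private lemma chain_restrict {t s : ℕ} {G : SimpleGraph V} (Z : SimpleGraph W) (v u : W)
    (φ : ((_ : Fin t) × W) → Set V)
    (h1 : ∀ w, (φ w).Nonempty)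
    (h2 : ∀ w, (G.induce (φ w)).Connected)
    (h3 : ∀ w₁ w₂, w₁ ≠ w₂ → Disjoint (φ w₁) (φ w₂))
    (h4 : ∀ w₁ w₂, (chainGraph (fun _ : Fin t => Z) (fun _ => v) (fun _ => u)).Adj w₁ w₂ →
      ∃ v₁ ∈ φ w₁, ∃ v₂ ∈ φ w₂, G.Adj v₁ v₂)
    (S : Set V) (emb : Fin s → Fin t) (off : ℕ)
    (hemb : ∀ j : Fin s, (emb j : ℕ) = (j : ℕ) + off)
    (hsub : ∀ (j : Fin s) (w : W), φ ⟨emb j, w⟩ ⊆ S) :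
    (chainGraph (fun _ : Fin s => Z) (fun _ => v) (fun _ => u)).IsMinorOf (G.induce S) := by
  have hinj : Function.Injective emb := by
    intro a b h
    have := congrArg (fun i : Fin t => (i : ℕ)) h
    simp only [hemb] at this
    exact Fin.ext (by omega)
  apply minor_transfer (φ := fun w => φ ⟨emb w.1, w.2⟩)
  · intro w; exact hsub w.1 w.2
  · intro w; exact h1 _
  · intro w; exact h2 _
  · intro w₁ w₂ hne
    refine h3 _ _ (fun h => hne ?_)
    obtain ⟨he, hx⟩ := sigma_eq_iff.mp h
    obtain ⟨i1, x1⟩ := w₁; obtain ⟨i2, x2⟩ := w₂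
    exact sigma_eq_iff.mpr ⟨hinj he, hx⟩
  · intro w₁ w₂ ha
    apply h4
    rw [chain_adj_iff] at ha ⊢
    rcases ha with ⟨he, hZ⟩ | ⟨hij, h5, h6⟩ | ⟨hij, h5, h6⟩
    · exact Or.inl ⟨congrArg emb he, hZ⟩
    · refine Or.inr (Or.inl ⟨?_, h5, h6⟩)
      rw [hemb, hemb]; omega
    · refine Or.inr (Or.inr ⟨?_, h5, h6⟩)
      rw [hemb, hemb]; omega

private lemma chain_connected (Z : SimpleGraph W) (v u : W) (hZ : Z.Connected)
    {t : ℕ} (ht : 0 < t) :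
    (chainGraph (fun _ : Fin t => Z) (fun _ => v) (fun _ => u)).Connected := by
  set E := chainGraph (fun _ : Fin t => Z) (fun _ => v) (fun _ => u) with hE
  have hneW : Nonempty W := hZ.nonempty
  have within : ∀ (i : Fin t) (x y : W), E.Reachable ⟨i, x⟩ ⟨i, y⟩ := by
    intro i x y
    exact (hZ.preconnected x y).map
      ⟨fun z => (⟨i, z⟩ : (_ : Fin t) × W), fun h => chain_adj_within Z v u i h⟩
  have down : ∀ n : ℕ, ∀ hn : n < t, ∀ x : W,
      E.Reachable ⟨⟨n, hn⟩, x⟩ ⟨⟨0, ht⟩, v⟩ := by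
    intro n
    induction n with
    | zero => intro hn x; exact within _ x v
    | succ m ih =>
      intro hn x
      have hm : m < t := by omega
      have e1 : E.Adj ⟨⟨m, hm⟩, u⟩ ⟨⟨m + 1, hn⟩, v⟩ :=
        (chain_adj_iff Z v u _ _).2 (Or.inr (Or.inl ⟨rfl, rfl, rfl⟩))
      exact ((within _ x v).trans e1.symm.reachable).trans (ih hm u)
  rw [connected_iff]
  refine ⟨fun a b => ?_, ⟨⟨⟨0, ht⟩, Classical.arbitrary W⟩⟩⟩
  obtain ⟨i, x⟩ := a; obtain ⟨j, y⟩ := b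
  exact (down i.1 i.2 x).trans (down j.1 j.2 y).symm

end Aux

section Key

private lemma key (C : GraphClass) (hmc : MinorClosed C)
    {W : Type} [Finite W] (Z : SimpleGraph W) (v u : W)
    (hZconn : Z.Connected) (hZC : ¬ C W Z) :
    ∀ (V : Type) (G : SimpleGraph V) (k : ℕ), ElimLE C V G k →
      ∀ t : ℕ,
        (chainGraph (fun _ : Fin t => Z) (fun _ => v) (fun _ => u)).IsMinorOf G →
        t < 2 ^ k := by
  intro V G k h
  induction h with
  | base V G k hC =>
    intro t hminor
    rcases Nat.eq_zero_or_pos t with rfl | ht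
    · exact pow_pos (by norm_num) _
    exfalso
    obtain ⟨φ, h1, h2, h3, h4⟩ := hminor
    have hZm : Z.IsMinorOf G := by
      refine ⟨fun w => φ ⟨⟨0, ht⟩, w⟩, fun w => h1 _, fun w => h2 _, ?_, ?_⟩
      · intro w₁ w₂ hne
        exact h3 _ _ (fun h => hne (sigma_eq_iff.mp h).2)
      · intro w₁ w₂ ha
        exact h4 _ _ (chain_adj_within Z v u _ ha)
    exact hZC (hmc _ _ _ _ hZm hC)
  | delete V G k x hGconn hrec ih =>
    intro t hminor
    rcases Nat.eq_zero_or_pos t with rfl | ht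
    · exact pow_pos (by norm_num) _
    obtain ⟨φ, h1, h2, h3, h4⟩ := hminor
    have hpow : 2 ^ (k + 1) = 2 ^ k + 2 ^ k := by rw [pow_succ]; ring
    by_cases hx : ∃ w, x ∈ φ w
    · obtain ⟨⟨i0, y0⟩, hx0⟩ := hx
      have havoid : ∀ w : (_ : Fin t) × W, w.1 ≠ i0 → x ∉ φ w := by
        intro w hw hmem
        exact Set.disjoint_left.mp
          (h3 w ⟨i0, y0⟩ (fun h => hw (congrArg Sigma.fst h))) hmem hx0
      have hi0t : (i0 : ℕ) < t := i0.2
      have hleft : (i0 : ℕ) < 2 ^ k := by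
        refine ih (i0 : ℕ) ?_
        refine chain_restrict Z v u φ h1 h2 h3 h4 _
          (fun j => ⟨j.1, by omega⟩) 0 (fun j => by simp) ?_
        intro j w y hy
        refine Set.mem_compl_singleton_iff.mpr (fun he => ?_)
        refine havoid ⟨⟨j.1, by omega⟩, w⟩ ?_ (he ▸ hy)
        intro hj
        have := congrArg (fun i : Fin t => (i : ℕ)) hj
        simp only at this
        omega
      have hright : t - 1 - (i0 : ℕ) < 2 ^ k := by
        refine ih (t - 1 - (i0 : ℕ)) ?_
        refine chain_restrict Z v u φ h1 h2 h3 h4 _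
          (fun j => ⟨j.1 + (i0 : ℕ) + 1, by omega⟩) ((i0 : ℕ) + 1)
          (fun j => by simp; omega) ?_
        intro j w y hy
        refine Set.mem_compl_singleton_iff.mpr (fun he => ?_)
        refine havoid ⟨⟨j.1 + (i0 : ℕ) + 1, by omega⟩, w⟩ ?_ (he ▸ hy)
        intro hj
        have := congrArg (fun i : Fin t => (i : ℕ)) hj
        simp only at this
        omega
      omega
    · push_neg at hx
      have := ih t (chain_restrict Z v u φ h1 h2 h3 h4 _ id 0 (fun j => by simp)
        (fun j w y hy => Set.mem_compl_singleton_iff.mpr (fun he => hx _ (he ▸ hy))))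
      omega
  | comp V G k hrec ih =>
    intro t hminor
    rcases Nat.eq_zero_or_pos t with rfl | ht
    · exact pow_pos (by norm_num) _
    obtain ⟨φ, h1, h2, h3, h4⟩ := hminor
    have hconn := chain_connected Z v u hZconn ht
    have hneW : Nonempty W := hZconn.nonempty
    obtain ⟨x0, hx0⟩ := h1 ⟨⟨0, ht⟩, Classical.arbitrary W⟩
    set J := G.connectedComponentMk x0 with hJ
    have reach : ∀ (w w' : (_ : Fin t) × W)
        (_ : (chainGraph (fun _ : Fin t => Z) (fun _ => v) (fun _ => u)).Walk w w'),
        ∀ a ∈ φ w, ∀ b ∈ φ w', G.Reachable a b := by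
      intro w w' p
      induction p with
      | nil => intro a ha b hb; exact reach_in_set (h2 _) ha hb
      | @cons w w1 w' hadj p ihp =>
        intro a ha b hb
        obtain ⟨v₁, hv₁, v₂, hv₂, he⟩ := h4 _ _ hadj
        exact ((reach_in_set (h2 _) ha hv₁).trans he.reachable).trans (ihp v₂ hv₂ b hb)
    have hsupp : ∀ (w : (_ : Fin t) × W), φ w ⊆ J.supp := by
      intro w b hb
      have hr : G.Reachable x0 b := by
        obtain ⟨p⟩ := hconn.preconnected ⟨⟨0, ht⟩, Classical.arbitrary W⟩ w
        exact reach _ _ p x0 hx0 b hb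
      simp only [ConnectedComponent.mem_supp_iff, hJ]
      exact ConnectedComponent.eq.mpr hr.symm
    exact ih J t (chain_restrict Z v u φ h1 h2 h3 h4 J.supp id 0 (fun j => by simp)
      (fun j w => hsupp _))

end Key

/-- **Observation 12.11.** Let `C` be a nonempty proper minor-closed class,
`Z ∈ obs(C^(c))`, and `(Z, v, u)` a `2`-rooted graph. Then there is a constant `c > 0`
such that for every `t ≥ 1` the elimination distance to `C` of the `(Z, v, u)`-chain of
size `t` is at least `c · log t`. -/
theorem chain_elimination_distance_lower_bound (C : GraphClass)
    (hne : NonemptyClass C) (hmc : MinorClosed C) (hproper : ProperClass C)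
    {W : Type} [Finite W] (Z : SimpleGraph W) (v u : W)
    (hZconn : Z.Connected) (hZ : IsObstruction (ClosureOf C) Z) :
    ∃ c : ℝ, 0 < c ∧ ∀ t : ℕ, 1 ≤ t → ∀ k : ℕ,
      ElimLE C ((_ : Fin t) × W)
        (chainGraph (fun _ : Fin t => Z) (fun _ => v) (fun _ => u)) k →
      c * Real.log (t : ℝ) ≤ (k : ℝ) := by
  have hlog2 : 0 < Real.log 2 := Real.log_pos (by norm_num)
  refine ⟨1 / Real.log 2, by positivity, ?_⟩
  intro t ht k hk
  have hZC : ¬ C W Z := by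
    intro hC
    exact hZ.1 (fun J => hmc W _ Z _ (induce_isMinorOf Z J.supp) hC)
  have h1 : t < 2 ^ k := key C hmc Z v u hZconn hZC _ _ _ hk t (isMinorOf_refl _)
  have h2 : (t : ℝ) ≤ (2 : ℝ) ^ k := by exact_mod_cast h1.le
  have htpos : (0 : ℝ) < (t : ℝ) := by exact_mod_cast ht
  have h3 : Real.log t ≤ (k : ℝ) * Real.log 2 := by
    calc Real.log t ≤ Real.log ((2 : ℝ) ^ k) := Real.log_le_log htpos h2
      _ = (k : ℝ) * Real.log 2 := Real.log_pow 2 k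
  rw [one_div_mul_eq_div, div_le_iff₀ hlog2]
  linarith
end

section
/- For every integer ζ ≥ 1, all integers z, t ≥ 2, all integers m ≥ z^{2^ζ} and n ≥ t^{2^ζ}, and every function S assigning to each pair (i,j) ∈ {1,…,m} × {1,…,n} a subset S(i,j) ⊆ {1,…,ζ}, there exist integers 0 ≤ a_1 < a_2 < ⋯ < a_z ≤ m and 0 ≤ b_1 < b_2 < ⋯ < b_t ≤ n such that all of the (z−1)(t−1) sets U_{p,q} := ⋃ { S(i,j) : a_p < i ≤ a_{p+1} and b_q < j ≤ b_{q+1} } (for 1 ≤ p ≤ z−1 and 1 ≤ q ≤ t−1) are equal. (Combinatorial content of Lemma 3.1, the homogeneous-subwall lemma, with f_{3.1}(x,ζ) = x^{2^ζ}) -/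
set_option autoImplicit false

/-- Interval decomposition: a point in `(A u, A v]` lies in `(A (P-1), A P]` for
some `P ∈ (u, v]`, provided `A` is monotone. -/
lemma interval_decomp_aux (A : ℕ → ℕ) (hA : Monotone A) :
    ∀ v u i : ℕ, A u < i → i ≤ A v →
      ∃ P, u < P ∧ P ≤ v ∧ A (P - 1) < i ∧ i ≤ A P := by
  intro v
  induction v with
  | zero =>
    intro u i h1 h2
    exact absurd (lt_of_lt_of_le h1 h2) (not_lt.2 (hA (Nat.zero_le u)))
  | succ v ih =>
    intro u i h1 h2
    have huv : u ≤ v := by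
      by_contra h
      exact absurd (lt_of_lt_of_le h1 h2) (not_lt.2 (hA (by omega)))
    by_cases hv : i ≤ A v
    · obtain ⟨P, h3, h4, h5, h6⟩ := ih u i h1 hv
      exact ⟨P, h3, by omega, h5, h6⟩
    · exact ⟨v + 1, by omega, le_rfl, by simpa using not_le.1 hv, h2⟩

/-- One-color homogenization: given a grid of size `m × n` with
`m ≥ (M-1)²`, `n ≥ (N-1)²`, there are cut points `A 0 < ⋯ < A (M-1) ≤ m`,
`B 0 < ⋯ < B (N-1) ≤ n` such that every block has the same status
with respect to the color `c` (contains it or not). -/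
lemma one_color_step {C : Type*} (M N m n : ℕ) (hM : 2 ≤ M) (hN : 2 ≤ N)
    (hm : (M - 1) * (M - 1) ≤ m) (hn : (N - 1) * (N - 1) ≤ n)
    (S : ℕ → ℕ → Set C) (c : C) :
    ∃ A B : ℕ → ℕ, StrictMono A ∧ A (M - 1) ≤ m ∧ StrictMono B ∧ B (N - 1) ≤ n ∧
      ∃ ε : Prop, ∀ P Q : ℕ, 1 ≤ P → P ≤ M - 1 → 1 ≤ Q → Q ≤ N - 1 →
        ((∃ i j, A (P - 1) < i ∧ i ≤ A P ∧ B (Q - 1) < j ∧ j ≤ B Q ∧ c ∈ S i j) ↔ ε) := by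
  by_cases h : ∀ P Q : ℕ, 1 ≤ P → P ≤ M - 1 → 1 ≤ Q → Q ≤ N - 1 →
      ∃ i j, (P - 1) * (M - 1) < i ∧ i ≤ P * (M - 1) ∧
        (Q - 1) * (N - 1) < j ∧ j ≤ Q * (N - 1) ∧ c ∈ S i j
  · refine ⟨fun P => P * (M - 1), fun Q => Q * (N - 1), ?_, ?_, ?_, ?_, True, ?_⟩
    · intro x y hxy
      exact Nat.mul_lt_mul_of_lt_of_le hxy le_rfl (by omega)
    · exact hm
    · intro x y hxy
      exact Nat.mul_lt_mul_of_lt_of_le hxy le_rfl (by omega)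
    · exact hn
    · intro P Q hP1 hP2 hQ1 hQ2
      simpa using h P Q hP1 hP2 hQ1 hQ2
  · push_neg at h
    obtain ⟨P₀, Q₀, hP₀1, hP₀2, hQ₀1, hQ₀2, h⟩ := h
    refine ⟨fun P => (P₀ - 1) * (M - 1) + P, fun Q => (Q₀ - 1) * (N - 1) + Q,
      fun x y hxy => by dsimp only; omega, ?_, fun x y hxy => by dsimp only; omega, ?_,
      False, ?_⟩
    · show (P₀ - 1) * (M - 1) + (M - 1) ≤ m
      have h1 : (P₀ - 1) * (M - 1) + (M - 1) = P₀ * (M - 1) := by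
        have : P₀ - 1 + 1 = P₀ := by omega
        calc (P₀ - 1) * (M - 1) + (M - 1) = (P₀ - 1 + 1) * (M - 1) := by ring
          _ = P₀ * (M - 1) := by rw [this]
      have h2 : P₀ * (M - 1) ≤ (M - 1) * (M - 1) := Nat.mul_le_mul_right _ hP₀2
      omega
    · show (Q₀ - 1) * (N - 1) + (N - 1) ≤ n
      have h1 : (Q₀ - 1) * (N - 1) + (N - 1) = Q₀ * (N - 1) := by
        have : Q₀ - 1 + 1 = Q₀ := by omega
        calc (Q₀ - 1) * (N - 1) + (N - 1) = (Q₀ - 1 + 1) * (N - 1) := by ring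
          _ = Q₀ * (N - 1) := by rw [this]
      have h2 : Q₀ * (N - 1) ≤ (N - 1) * (N - 1) := Nat.mul_le_mul_right _ hQ₀2
      omega
    · intro P Q hP1 hP2 hQ1 hQ2
      simp only [iff_false]
      rintro ⟨i, j, h1, h2, h3, h4, h5⟩
      have hPM : (P₀ - 1) * (M - 1) + (M - 1) = P₀ * (M - 1) := by
        have : P₀ - 1 + 1 = P₀ := by omega
        calc (P₀ - 1) * (M - 1) + (M - 1) = (P₀ - 1 + 1) * (M - 1) := by ring
          _ = P₀ * (M - 1) := by rw [this]
      have hQN : (Q₀ - 1) * (N - 1) + (N - 1) = Q₀ * (N - 1) := by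
        have : Q₀ - 1 + 1 = Q₀ := by omega
        calc (Q₀ - 1) * (N - 1) + (N - 1) = (Q₀ - 1 + 1) * (N - 1) := by ring
          _ = Q₀ * (N - 1) := by rw [this]
      exact h i j (by omega) (by omega) (by omega) (by omega) h5

/-- Main auxiliary lemma, by induction on the (finite) set of colors. -/
lemma homogeneous_aux {C : Type*} [DecidableEq C] (F : Finset C) :
    ∀ z t m n : ℕ, 2 ≤ z → 2 ≤ t → z ^ 2 ^ F.card ≤ m → t ^ 2 ^ F.card ≤ n →
    ∀ S : ℕ → ℕ → Set C, (∀ i j, S i j ⊆ ↑F) →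
    ∃ a b : ℕ → ℕ,
      (∀ p p' : ℕ, p < p' → p' < z → a p < a p') ∧ (∀ p : ℕ, p < z → a p ≤ m) ∧
      (∀ q q' : ℕ, q < q' → q' < t → b q < b q') ∧ (∀ q : ℕ, q < t → b q ≤ n) ∧
      ∀ p q p' q' : ℕ, p + 1 < z → q + 1 < t → p' + 1 < z → q' + 1 < t →
        (⋃ (i : ℕ) (_ : a p < i ∧ i ≤ a (p + 1))
            (j : ℕ) (_ : b q < j ∧ j ≤ b (q + 1)), S i j) =
        (⋃ (i : ℕ) (_ : a p' < i ∧ i ≤ a (p' + 1))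
            (j : ℕ) (_ : b q' < j ∧ j ≤ b (q' + 1)), S i j) := by
  induction F using Finset.induction with
  | empty =>
    intro z t m n hz ht hm hn S hS
    simp only [Finset.card_empty, pow_zero, pow_one] at hm hn
    refine ⟨id, id, fun p p' h1 h2 => h1, fun p hp => by simp only [id]; omega,
      fun q q' h1 h2 => h1, fun q hq => by simp only [id]; omega, ?_⟩
    have hempty : ∀ u v u' v' : ℕ,
        (⋃ (i : ℕ) (_ : u < i ∧ i ≤ v) (j : ℕ) (_ : u' < j ∧ j ≤ v'), S i j) = ∅ := by
      intro u v u' v'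
      rw [Set.eq_empty_iff_forall_notMem]
      intro x hx
      simp only [Set.mem_iUnion] at hx
      obtain ⟨i, _, j, _, hx⟩ := hx
      simpa using hS i j hx
    intro p q p' q' _ _ _ _
    rw [hempty, hempty]
  | @insert c F' hc ih =>
    intro z t m n hz ht hm hn S hS
    set M := z ^ 2 ^ F'.card + 1 with hMdef
    set N := t ^ 2 ^ F'.card + 1 with hNdef
    have hM1 : M - 1 = z ^ 2 ^ F'.card := by omega
    have hN1 : N - 1 = t ^ 2 ^ F'.card := by omega
    have hzpos : 1 ≤ z ^ 2 ^ F'.card := Nat.one_le_pow _ _ (by omega)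
    have htpos : 1 ≤ t ^ 2 ^ F'.card := Nat.one_le_pow _ _ (by omega)
    have hcard : (insert c F').card = F'.card + 1 := Finset.card_insert_of_notMem hc
    have hmM : (M - 1) * (M - 1) ≤ m := by
      rw [hM1, ← pow_add]
      calc z ^ (2 ^ F'.card + 2 ^ F'.card) = z ^ 2 ^ (F'.card + 1) := by
            congr 1; omega
        _ = z ^ 2 ^ (insert c F').card := by rw [hcard]
        _ ≤ m := hm
    have hnN : (N - 1) * (N - 1) ≤ n := by
      rw [hN1, ← pow_add]
      calc t ^ (2 ^ F'.card + 2 ^ F'.card) = t ^ 2 ^ (F'.card + 1) := by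
            congr 1; omega
        _ = t ^ 2 ^ (insert c F').card := by rw [hcard]
        _ ≤ n := hn
    obtain ⟨A, B, hA, hAm, hB, hBn, ε, hε⟩ :=
      one_color_step M N m n (by omega) (by omega) hmM hnN S c
    set S' : ℕ → ℕ → Set C := fun P Q =>
      (⋃ (i : ℕ) (_ : A (P - 1) < i ∧ i ≤ A P)
        (j : ℕ) (_ : B (Q - 1) < j ∧ j ≤ B Q), S i j) \ {c} with hS'def
    have hS' : ∀ P Q, S' P Q ⊆ ↑F' := by
      intro P Q x hx
      obtain ⟨hx1, hx2⟩ := hx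
      simp only [Set.mem_iUnion] at hx1
      obtain ⟨i, _, j, _, hx1⟩ := hx1
      have := hS i j hx1
      simp only [Finset.coe_insert, Set.mem_insert_iff] at this
      rcases this with h | h
      · exact absurd h hx2
      · exact h
    obtain ⟨α, β, hα, hαb, hβ, hβb, heq⟩ :=
      ih z t (M - 1) (N - 1) hz ht (le_of_eq hM1.symm) (le_of_eq hN1.symm) S' hS'
    refine ⟨fun p => A (α p), fun q => B (β q), ?_, ?_, ?_, ?_, ?_⟩
    · intro p p' h1 h2; exact hA (hα p p' h1 h2)
    · intro p hp; exact le_trans (hA.monotone (hαb p hp)) hAm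
    · intro q q' h1 h2; exact hB (hβ q q' h1 h2)
    · intro q hq; exact le_trans (hB.monotone (hβb q hq)) hBn
    · have claim : ∀ p q : ℕ, p + 1 < z → q + 1 < t →
        (⋃ (i : ℕ) (_ : A (α p) < i ∧ i ≤ A (α (p + 1)))
            (j : ℕ) (_ : B (β q) < j ∧ j ≤ B (β (q + 1))), S i j) =
        (⋃ (P : ℕ) (_ : α p < P ∧ P ≤ α (p + 1))
            (Q : ℕ) (_ : β q < Q ∧ Q ≤ β (q + 1)), S' P Q) ∪ {x | x = c ∧ ε} := by
        intro p q hp hq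
        have hα1 : α p < α (p + 1) := hα p (p + 1) (by omega) (by omega)
        have hαb1 : α (p + 1) ≤ M - 1 := hαb (p + 1) (by omega)
        have hβ1 : β q < β (q + 1) := hβ q (q + 1) (by omega) (by omega)
        have hβb1 : β (q + 1) ≤ N - 1 := hβb (q + 1) (by omega)
        ext x
        simp only [Set.mem_union, Set.mem_iUnion, Set.mem_setOf_eq, hS'def,
          Set.mem_diff, Set.mem_singleton_iff]
        constructor
        · rintro ⟨i, ⟨hi1, hi2⟩, j, ⟨hj1, hj2⟩, hx⟩
          obtain ⟨P, hP1, hP2, hP3, hP4⟩ :=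
            interval_decomp_aux A hA.monotone (α (p + 1)) (α p) i hi1 hi2
          obtain ⟨Q, hQ1, hQ2, hQ3, hQ4⟩ :=
            interval_decomp_aux B hB.monotone (β (q + 1)) (β q) j hj1 hj2
          by_cases hxc : x = c
          · refine Or.inr ⟨hxc, ?_⟩
            exact (hε P Q (by omega) (by omega) (by omega) (by omega)).mp
              ⟨i, j, hP3, hP4, hQ3, hQ4, hxc ▸ hx⟩
          · exact Or.inl ⟨P, ⟨hP1, hP2⟩, Q, ⟨hQ1, hQ2⟩,
              ⟨i, ⟨hP3, hP4⟩, j, ⟨hQ3, hQ4⟩, hx⟩, hxc⟩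
        · rintro (⟨P, ⟨hP1, hP2⟩, Q, ⟨hQ1, hQ2⟩, hxm, hxc⟩ | ⟨hxc, hε'⟩)
          · obtain ⟨i, ⟨hi1, hi2⟩, j, ⟨hj1, hj2⟩, hx⟩ := hxm
            refine ⟨i, ⟨?_, ?_⟩, j, ⟨?_, ?_⟩, hx⟩
            · exact lt_of_le_of_lt (hA.monotone (by omega : α p ≤ P - 1)) hi1
            · exact le_trans hi2 (hA.monotone hP2)
            · exact lt_of_le_of_lt (hB.monotone (by omega : β q ≤ Q - 1)) hj1
            · exact le_trans hj2 (hB.monotone hQ2)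
          · obtain ⟨i, j, h1, h2, h3, h4, h5⟩ :=
              (hε (α p + 1) (β q + 1) (by omega) (by omega) (by omega) (by omega)).mpr hε'
            simp only [Nat.add_sub_cancel] at h1 h3
            refine ⟨i, ⟨h1, le_trans h2 (hA.monotone (by omega))⟩,
              j, ⟨h3, le_trans h4 (hB.monotone (by omega))⟩, ?_⟩
            rw [hxc]; exact h5
      intro p q p' q' hp hq hp' hq'
      rw [claim p q hp hq, claim p' q' hp' hq', heq p q p' q' hp hq hp' hq']

/-- **Combinatorial content of Lemma 3.1 (homogeneous-subwall lemma), with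
`f_{3.1}(x, ζ) = x ^ (2 ^ ζ)`.** For every `ζ ≥ 1`, all `z, t ≥ 2`, all
`m ≥ z ^ (2 ^ ζ)` and `n ≥ t ^ (2 ^ ζ)`, and every assignment `S` of a subset of
`{1, …, ζ}` (here: `Fin ζ`) to each pair `(i, j)` with `1 ≤ i ≤ m`, `1 ≤ j ≤ n`, there
are cut points `0 ≤ a 0 < a 1 < ⋯ < a (z-1) ≤ m` and `0 ≤ b 0 < ⋯ < b (t-1) ≤ n` such
that all `(z-1)(t-1)` block unions
`U p q = ⋃ {S i j : a p < i ≤ a (p+1), b q < j ≤ b (q+1)}` are equal. -/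
theorem homogeneous_subwall (ζ z t m n : ℕ) (hζ : 1 ≤ ζ) (hz : 2 ≤ z) (ht : 2 ≤ t)
    (hm : z ^ 2 ^ ζ ≤ m) (hn : t ^ 2 ^ ζ ≤ n) (S : ℕ → ℕ → Set (Fin ζ)) :
    ∃ a b : ℕ → ℕ,
      (∀ p p' : ℕ, p < p' → p' < z → a p < a p') ∧ (∀ p : ℕ, p < z → a p ≤ m) ∧
      (∀ q q' : ℕ, q < q' → q' < t → b q < b q') ∧ (∀ q : ℕ, q < t → b q ≤ n) ∧
      ∀ p q p' q' : ℕ, p + 1 < z → q + 1 < t → p' + 1 < z → q' + 1 < t →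
        (⋃ (i : ℕ) (_ : a p < i ∧ i ≤ a (p + 1))
            (j : ℕ) (_ : b q < j ∧ j ≤ b (q + 1)), S i j) =
        (⋃ (i : ℕ) (_ : a p' < i ∧ i ≤ a (p' + 1))
            (j : ℕ) (_ : b q' < j ∧ j ≤ b (q' + 1)), S i j) := by
  exact homogeneous_aux (Finset.univ : Finset (Fin ζ)) z t m n hz ht
    (by simpa using hm) (by simpa using hn) S (fun i j => by simp)
end

section
/- Let w ∈ ℕ and let ⟨G, Λ⟩ be a linear society with Λ = ⟨v_1, …, v_l⟩ whose depth is at most w. Then there is a sequence B_1, …, B_l of subsets of V(G) such that: (1) B_1 ∪ ⋯ ∪ B_l = V(G); (2) for every edge xy ∈ E(G) there is some i ∈ {1,…,l} with {x,y} ⊆ B_i; (3) v_i ∈ B_i for every i ∈ {1,…,l}; (4) B_i ∩ B_h ⊆ B_j whenever 1 ≤ i ≤ j ≤ h ≤ l; and (5) |B_i ∩ B_{i+1}| ≤ w for every i ∈ {1,…,l−1}. (Proposition 7.1) -/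
open SimpleGraph

set_option autoImplicit false

/-- `A` is a segment of the cyclic ordering of `Fin l`: no four points occurring in
cyclic order alternate between `A` and its complement. -/
def IsSegment {l : ℕ} (A : Set (Fin l)) : Prop :=
  ¬ ∃ i₁ i₂ i₃ i₄ : Fin l, i₁ < i₂ ∧ i₂ < i₃ ∧ i₃ < i₄ ∧
    ((i₁ ∈ A ∧ i₂ ∉ A ∧ i₃ ∈ A ∧ i₄ ∉ A) ∨ (i₁ ∉ A ∧ i₂ ∈ A ∧ i₃ ∉ A ∧ i₄ ∈ A))

/-- The linear society `⟨G, Λ⟩` has a transaction of order `r`: there are disjoint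
segments `A`, `B` of `Λ` and `r` pairwise vertex-disjoint paths of `G`, each with one
endpoint in `Λ(A)` and the other in `Λ(B)`. -/
def HasTransaction {V : Type} (G : SimpleGraph V) {l : ℕ} (Λ : Fin l → V) (r : ℕ) : Prop :=
  ∃ A B : Set (Fin l), IsSegment A ∧ IsSegment B ∧ Disjoint A B ∧
    ∃ (e f : Fin r → Fin l) (p : ∀ i, G.Walk (Λ (e i)) (Λ (f i))),
      (∀ i, (p i).IsPath) ∧ (∀ i, e i ∈ A) ∧ (∀ i, f i ∈ B) ∧
      ∀ i j : Fin r, i ≠ j → ∀ x : V, x ∈ (p i).support → x ∉ (p j).support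

noncomputable section
namespace Prop71

open SimpleGraph

variable {V : Type}

/-- `Z` separates `S` from `T` in `G`: every walk from `S` to `T` meets `Z`. -/
def Sep (G : SimpleGraph V) (S T Z : Set V) : Prop :=
  ∀ ⦃u v : V⦄, u ∈ S → v ∈ T → ∀ p : G.Walk u v, ∃ z ∈ Z, z ∈ p.support

/-- There are `k` pairwise vertex-disjoint walks from `S` to `T` in `G`. -/
def DisjPaths (G : SimpleGraph V) (S T : Set V) (k : ℕ) : Prop :=
  ∃ (a b : Fin k → V) (p : ∀ i, G.Walk (a i) (b i)),
    (∀ i, a i ∈ S) ∧ (∀ i, b i ∈ T) ∧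
    ∀ i j, i ≠ j → ∀ x, x ∈ (p i).support → x ∉ (p j).support

lemma DisjPaths.mono {G : SimpleGraph V} {S T : Set V} {k m : ℕ}
    (h : DisjPaths G S T k) (hm : m ≤ k) : DisjPaths G S T m := by
  obtain ⟨a, b, p, ha, hb, hd⟩ := h
  exact ⟨a ∘ Fin.castLE hm, b ∘ Fin.castLE hm, fun i => p _, fun i => ha _, fun i => hb _,
    fun i j hij x hx => hd _ _ (fun hh => hij (Fin.castLE_injective hm hh)) x hx⟩

lemma DisjPaths.mono_graph {G G' : SimpleGraph V} {S T : Set V} {k : ℕ}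
    (hle : G ≤ G') (h : DisjPaths G S T k) : DisjPaths G' S T k := by
  obtain ⟨a, b, p, ha, hb, hd⟩ := h
  refine ⟨a, b, fun i => (p i).transfer G' (fun e he => ?_), ha, hb, fun i j hij x hx => ?_⟩
  · exact (SimpleGraph.edgeSet_subset_edgeSet.2 hle) ((p i).edges_subset_edgeSet he)
  · rw [Walk.support_transfer] at hx ⊢
    exact hd i j hij x hx

variable {G : SimpleGraph V}

lemma mem_support_tail_of_ne {u v a : V} (q : G.Walk u v) (ha : a ∈ q.support) (h : a ≠ u) :
    a ∈ q.support.tail := by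
  cases q with
  | nil => simp only [Walk.support_nil, List.mem_singleton] at ha; exact absurd ha h
  | cons h' q' =>
    rw [Walk.support_cons] at ha
    rcases List.mem_cons.mp ha with h1 | h1
    · exact absurd h1 h
    · simpa using h1

/-- First hit of a walk on a set `X` (given the walk meets `X`). -/
lemma exists_firstHit [DecidableEq V] {X : Set V} {u v : V} (p : G.Walk u v)
    (hm : ∃ a ∈ p.support, a ∈ X) :
    ∃ (z : V) (q : G.Walk u z), z ∈ X ∧ (∀ a ∈ q.support, a ∈ p.support) ∧
      (∀ a ∈ q.support, a ∈ X → a = z) ∧ q.support.count z = 1 := by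
  induction p with
  | nil =>
    obtain ⟨a, haa, haX⟩ := hm
    simp only [Walk.support_nil, List.mem_singleton] at haa
    subst haa
    exact ⟨a, Walk.nil, haX, by simp, by simp +contextual, by simp⟩
  | @cons u m v h p ih =>
    by_cases hu : u ∈ X
    · refine ⟨u, Walk.nil, hu, by simp, by simp +contextual, by simp⟩
    · have hm' : ∃ a ∈ p.support, a ∈ X := by
        obtain ⟨a, haa, haX⟩ := hm
        rw [Walk.support_cons] at haa
        rcases List.mem_cons.mp haa with h1 | h1
        · exact absurd (h1 ▸ haX) hu
        · exact ⟨a, h1, haX⟩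
      obtain ⟨z, q, hz, hsub, honly, hcount⟩ := ih hm'
      refine ⟨z, Walk.cons h q, hz, ?_, ?_, ?_⟩
      · intro a haa
        rw [Walk.support_cons] at haa ⊢
        rcases List.mem_cons.mp haa with h1 | h1
        · exact h1 ▸ List.mem_cons_self
        · exact List.mem_cons_of_mem _ (hsub _ h1)
      · intro a haa haX
        rw [Walk.support_cons] at haa
        rcases List.mem_cons.mp haa with h1 | h1
        · exact absurd (h1 ▸ haX) hu
        · exact honly _ h1 haX
      · rw [Walk.support_cons, List.count_cons_of_ne (fun hh : u = z => hu (by rw [hh]; exact hz)), hcount]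

lemma count_one_not_mem_takeUntil [DecidableEq V] {u z v : V} (q : G.Walk u z)
    (hc : q.support.count z = 1) (hv : v ∈ q.support) (hne : v ≠ z) :
    z ∉ (q.takeUntil v hv).support := by
  intro hzin
  have h1 : z ∈ (q.dropUntil v hv).support.tail :=
    mem_support_tail_of_ne _ (Walk.end_mem_support _) (Ne.symm hne)
  rw [← q.take_spec hv, Walk.support_append, List.count_append] at hc
  have a1 : 0 < List.count z (q.takeUntil v hv).support := List.count_pos_iff.2 hzin
  have a2 : 0 < List.count z (q.dropUntil v hv).support.tail := List.count_pos_iff.2 h1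
  omega

lemma count_one_not_mem_dropUntil [DecidableEq V] {z t v : V} (q : G.Walk z t)
    (hc : q.support.count z = 1) (hv : v ∈ q.support) (hne : v ≠ z) :
    z ∉ (q.dropUntil v hv).support := by
  intro hzin
  have h1 : z ∈ (q.dropUntil v hv).support.tail :=
    mem_support_tail_of_ne _ hzin (Ne.symm hne)
  have h2 : z ∈ (q.takeUntil v hv).support := Walk.start_mem_support _
  rw [← q.take_spec hv, Walk.support_append, List.count_append] at hc
  have a1 : 0 < List.count z (q.takeUntil v hv).support := List.count_pos_iff.2 h2
  have a2 : 0 < List.count z (q.dropUntil v hv).support.tail := List.count_pos_iff.2 h1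
  omega

end Prop71
namespace Prop71
open SimpleGraph
variable {V : Type}

lemma glue [Fintype V] [DecidableEq V] {G : SimpleGraph V} {S T X : Set V} {k : ℕ}
    (hX : X.ncard = k) (hsep : Sep G S T X)
    (h1 : DisjPaths G S X k) (h2 : DisjPaths G X T k) : DisjPaths G S T k := by
  classical
  obtain ⟨a, b, p, haS, hbX, hd1⟩ := h1
  obtain ⟨a', b', p', haX, hbT, hd2⟩ := h2
  have trim1 : ∀ i, ∃ (z : V) (q : G.Walk (a i) z), z ∈ X ∧
      (∀ c ∈ q.support, c ∈ (p i).support) ∧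
      (∀ c ∈ q.support, c ∈ X → c = z) ∧ q.support.count z = 1 :=
    fun i => exists_firstHit (p i) ⟨b i, Walk.end_mem_support _, hbX i⟩
  choose z q hzX hqsub hqonly hqcount using trim1
  have trim2 : ∀ i, ∃ (z' : V) (r : G.Walk z' (b' i)), z' ∈ X ∧
      (∀ c ∈ r.support, c ∈ (p' i).support) ∧
      (∀ c ∈ r.support, c ∈ X → c = z') ∧ r.support.count z' = 1 := by
    intro i
    obtain ⟨z', r, h₁, h₂, h₃, h₄⟩ := exists_firstHit (p' i).reverse
      ⟨a' i, by rw [Walk.support_reverse, List.mem_reverse]; exact Walk.start_mem_support _, haX i⟩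
    refine ⟨z', r.reverse, h₁, fun c hc => ?_, fun c hc => ?_, ?_⟩
    · rw [Walk.support_reverse, List.mem_reverse] at hc
      have := h₂ c hc; rwa [Walk.support_reverse, List.mem_reverse] at this
    · rw [Walk.support_reverse, List.mem_reverse] at hc
      exact h₃ c hc
    · rw [Walk.support_reverse, List.count_reverse]; exact h₄
  choose z' r hz'X hrsub hronly hrcount using trim2
  -- injectivity
  have hzinj : Function.Injective z := by
    intro i j hij
    by_contra hne
    exact hd1 i j (fun hh => hne hh) (z i)
      (hqsub i _ (Walk.end_mem_support _)) (hij ▸ hqsub j _ (Walk.end_mem_support _))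
  have hz'inj : Function.Injective z' := by
    intro i j hij
    by_contra hne
    exact hd2 i j (fun hh => hne hh) (z' i)
      (hrsub i _ (Walk.start_mem_support _)) (hij ▸ hrsub j _ (Walk.start_mem_support _))
  -- bijections with X
  have hcard : Fintype.card X = k := by
    rw [Set.ncard_eq_toFinset_card'] at hX
    rwa [Set.toFinset_card] at hX
  have hbij1 : Function.Bijective (fun i => (⟨z i, hzX i⟩ : X)) :=
    (Fintype.bijective_iff_injective_and_card _).2
      ⟨fun i j hij => hzinj (congrArg Subtype.val hij), by rw [Fintype.card_fin, hcard]⟩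
  have hbij2 : Function.Bijective (fun i => (⟨z' i, hz'X i⟩ : X)) :=
    (Fintype.bijective_iff_injective_and_card _).2
      ⟨fun i j hij => hz'inj (congrArg Subtype.val hij), by rw [Fintype.card_fin, hcard]⟩
  set E1 := Equiv.ofBijective _ hbij1
  set E2 := Equiv.ofBijective _ hbij2
  set σ : Fin k → Fin k := fun i => E2.symm (E1 i) with hσdef
  have hσ : ∀ i, z' (σ i) = z i := by
    intro i
    have := E2.apply_symm_apply (E1 i)
    exact congrArg Subtype.val this
  have hσinj : Function.Injective σ := fun i j hij =>
    E1.injective (E2.symm.injective hij)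
  -- crossing lemma
  have cross : ∀ i m, z i ≠ z' m → ∀ c, (hc1 : c ∈ (q i).support) →
      (hc2 : c ∈ (r m).support) → False := by
    intro i m hne c hc1 hc2
    have w := ((q i).takeUntil c hc1).append ((r m).dropUntil c hc2)
    obtain ⟨x0, hx0X, hx0w⟩ := hsep (haS i) (hbT m)
      (((q i).takeUntil c hc1).append ((r m).dropUntil c hc2))
    rw [Walk.mem_support_append_iff] at hx0w
    rcases hx0w with hx0 | hx0
    · have hx0q : x0 ∈ (q i).support := Walk.support_takeUntil_subset _ _ hx0
      have hx0z : x0 = z i := hqonly i _ hx0q hx0X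
      have hcne : c ≠ z i := by
        intro hceq
        exact hne (by rw [← hronly m c hc2 (hceq ▸ hzX i), hceq])
      exact count_one_not_mem_takeUntil (q i) (hqcount i) hc1 hcne (hx0z ▸ hx0)
    · have hx0r : x0 ∈ (r m).support := Walk.support_dropUntil_subset _ _ hx0
      have hx0z : x0 = z' m := hronly m _ hx0r hx0X
      have hcne : c ≠ z' m := by
        intro hceq
        exact hne ((hqonly i c hc1 (hceq ▸ hz'X m)) ▸ hceq)
      exact count_one_not_mem_dropUntil (r m) (hrcount m) hc2 hcne (hx0z ▸ hx0)
  -- assemble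
  refine ⟨a, fun i => b' (σ i), fun i => (q i).append (((r (σ i))).copy (hσ i) rfl),
    haS, fun i => hbT _, ?_⟩
  intro i j hij x hxi hxj
  rw [Walk.mem_support_append_iff] at hxi hxj
  rw [Walk.support_copy] at hxi hxj
  rcases hxi with hxi | hxi <;> rcases hxj with hxj | hxj
  · exact hd1 i j hij x (hqsub i _ hxi) (hqsub j _ hxj)
  · exact cross i (σ j) (fun hh => hij (hzinj (hh.trans (hσ j)))) x hxi hxj
  · exact cross j (σ i) (fun hh => hij (hzinj (hh.trans (hσ i))).symm) x hxj hxi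
  · exact hd2 (σ i) (σ j) (fun hh => hij (hσinj hh)) x (hrsub _ _ hxi) (hrsub _ _ hxj)

end Prop71
namespace Prop71
open SimpleGraph
variable {V : Type} [DecidableEq V]

/-- The map collapsing `y` onto `x`. -/
def cf (x y v : V) : V := if v = y then x else v

lemma cf_of_ne {x y v : V} (h : v ≠ y) : cf x y v = v := if_neg h

lemma cf_y {x y : V} : cf x y y = x := if_pos rfl

lemma cf_x {x y : V} (h : x ≠ y) : cf x y x = x := if_neg h

/-- The graph obtained by identifying `y` with `x`. -/
def collapse (G : SimpleGraph V) (x y : V) : SimpleGraph V where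
  Adj a b := a ≠ b ∧ ∃ a' b', cf x y a' = a ∧ cf x y b' = b ∧ G.Adj a' b'
  symm := by constructor; rintro a b ⟨hne, a', b', ha, hb, hadj⟩; exact ⟨hne.symm, b', a', hb, ha, hadj.symm⟩
  loopless := by constructor; rintro a ⟨hne, -⟩; exact hne rfl

lemma cf_eq {x y v w : V} (h : cf x y v = cf x y w) (hne : v ≠ w) :
    (v = x ∧ w = y) ∨ (v = y ∧ w = x) := by
  unfold cf at h
  split_ifs at h with h1 h2 h2
  · exact absurd (h1.trans h2.symm) hne
  · exact Or.inr ⟨h1, h.symm⟩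
  · exact Or.inl ⟨h, h2⟩
  · exact absurd h hne

lemma walk_of_cf_eq {G : SimpleGraph V} {x y : V} (hxy : G.Adj x y) {v w : V}
    (h : cf x y v = cf x y w) :
    ∃ p : G.Walk v w, ∀ c ∈ p.support, c = v ∨ c = w := by
  by_cases hvw : v = w
  · subst hvw
    exact ⟨Walk.nil, by simp⟩
  · rcases cf_eq h hvw with ⟨hv, hw⟩ | ⟨hv, hw⟩
    · subst hv; subst hw
      refine ⟨Walk.cons hxy Walk.nil, ?_⟩
      intro c hc
      simp only [Walk.support_cons, Walk.support_nil, List.mem_cons, List.mem_singleton] at hc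
      tauto
    · subst hv; subst hw
      refine ⟨Walk.cons hxy.symm Walk.nil, ?_⟩
      intro c hc
      simp only [Walk.support_cons, Walk.support_nil, List.mem_cons, List.mem_singleton] at hc
      tauto

lemma collapse_project {G : SimpleGraph V} (x y : V) {u v : V} (p : G.Walk u v) :
    ∃ q : (collapse G x y).Walk (cf x y u) (cf x y v),
      ∀ c ∈ q.support, ∃ d ∈ p.support, cf x y d = c := by
  induction p with
  | nil =>
    refine ⟨Walk.nil, ?_⟩
    intro c hc
    simp only [Walk.support_nil, List.mem_singleton] at hc
    exact ⟨_, Walk.start_mem_support _, hc.symm⟩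
  | @cons u m v h p ih =>
    obtain ⟨q, hq⟩ := ih
    by_cases he : cf x y u = cf x y m
    · refine ⟨q.copy he.symm rfl, fun c hc => ?_⟩
      rw [Walk.support_copy] at hc
      obtain ⟨d, hd, hdc⟩ := hq c hc
      exact ⟨d, by rw [Walk.support_cons]; exact List.mem_cons_of_mem _ hd, hdc⟩
    · refine ⟨Walk.cons (id ⟨he, u, m, rfl, rfl, h⟩ : (collapse G x y).Adj _ _) q, fun c hc => ?_⟩
      rw [Walk.support_cons] at hc
      rcases List.mem_cons.mp hc with h1 | h1
      · exact ⟨u, by rw [Walk.support_cons]; exact List.mem_cons_self, h1.symm⟩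
      · obtain ⟨d, hd, hdc⟩ := hq c h1
        exact ⟨d, by rw [Walk.support_cons]; exact List.mem_cons_of_mem _ hd, hdc⟩

lemma collapse_lift {G : SimpleGraph V} {x y : V} (hxy : G.Adj x y) :
    ∀ {s t : V} (q : (collapse G x y).Walk s t) (s' t' : V),
      cf x y s' = s → cf x y t' = t →
      ∃ p : G.Walk s' t', ∀ c ∈ p.support, cf x y c ∈ q.support := by
  intro s t q
  induction q with
  | nil =>
    intro s' t' hs ht
    obtain ⟨p, hp⟩ := walk_of_cf_eq hxy (hs.trans ht.symm)
    refine ⟨p, fun c hc => ?_⟩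
    rcases hp c hc with h | h
    · rw [h, hs]; exact Walk.start_mem_support _
    · rw [h, ht]; exact Walk.start_mem_support _
  | @cons s m t hadj q ih =>
    intro s' t' hs ht
    obtain ⟨hne, a', b', ha', hb', hGadj⟩ := id hadj
    obtain ⟨p₁, hp₁⟩ := walk_of_cf_eq hxy (hs.trans ha'.symm)
    obtain ⟨p₂, hp₂⟩ := ih b' t' hb' ht
    refine ⟨p₁.append (Walk.cons hGadj p₂), fun c hc => ?_⟩
    rw [Walk.mem_support_append_iff] at hc
    rcases hc with hc | hc
    · rw [Walk.support_cons]
      rcases hp₁ c hc with h | h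
      · rw [h, hs]; exact List.mem_cons_self
      · rw [h, ha']; exact List.mem_cons_self
    · rw [Walk.support_cons] at hc ⊢
      rcases List.mem_cons.mp hc with h1 | h1
      · rw [h1, ha']; exact List.mem_cons_self
      · exact List.mem_cons_of_mem _ (hp₂ c h1)

lemma collapse_edge_ncard [Fintype V] {G : SimpleGraph V} {x y : V} (hxy : G.Adj x y) :
    (collapse G x y).edgeSet.ncard ≤ (G.edgeSet \ {s(x, y)}).ncard := by
  have hsub : (collapse G x y).edgeSet ⊆ Sym2.map (cf x y) '' (G.edgeSet \ {s(x, y)}) := by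
    intro e he
    induction e using Sym2.ind with
    | _ a b =>
      rw [SimpleGraph.mem_edgeSet] at he
      obtain ⟨hne, a', b', ha, hb, hadj⟩ := he
      refine ⟨s(a', b'), ⟨(SimpleGraph.mem_edgeSet _).2 hadj, ?_⟩, ?_⟩
      · intro hmem
        rw [Set.mem_singleton_iff, Sym2.eq_iff] at hmem
        apply hne
        rcases hmem with ⟨h1, h2⟩ | ⟨h1, h2⟩
        · rw [← ha, ← hb, h1, h2, cf_x hxy.ne, cf_y]
        · rw [← ha, ← hb, h1, h2, cf_x hxy.ne, cf_y]
      · rw [Sym2.map_pair_eq, ha, hb]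
  calc (collapse G x y).edgeSet.ncard
      ≤ (Sym2.map (cf x y) '' (G.edgeSet \ {s(x, y)})).ncard :=
        Set.ncard_le_ncard hsub (Set.toFinite _)
    _ ≤ (G.edgeSet \ {s(x, y)}).ncard := Set.ncard_image_le (Set.toFinite _)

end Prop71
namespace Prop71
open SimpleGraph
variable {V : Type} [Fintype V] [DecidableEq V]

lemma menger_of_no_edges {G : SimpleGraph V} (hE : G.edgeSet = ∅) (S T : Set V) :
    ∃ Z : Set V, Sep G S T Z ∧ DisjPaths G S T Z.ncard := by
  classical
  have hwalk : ∀ {u v : V}, G.Walk u v → u = v := by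
    intro u v p
    cases p with
    | nil => rfl
    | cons h p =>
      exact absurd ((SimpleGraph.mem_edgeSet _).2 h) (by rw [hE]; exact Set.notMem_empty _)
  refine ⟨S ∩ T, ?_, ?_⟩
  · intro u v hu hv p
    have huv := hwalk p; subst huv
    exact ⟨u, ⟨hu, hv⟩, Walk.start_mem_support _⟩
  · have hcard : Fintype.card (S ∩ T : Set V) = (S ∩ T).ncard := by
      rw [Set.ncard_eq_toFinset_card', Set.toFinset_card]
    set E := Fintype.equivFinOfCardEq hcard
    refine ⟨fun i => (E.symm i : V), fun i => (E.symm i : V), fun _ => Walk.nil,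
      fun i => (E.symm i).2.1, fun i => (E.symm i).2.2, ?_⟩
    intro i j hij x hxi hxj
    simp only [Walk.support_nil, List.mem_singleton] at hxi hxj
    exact hij (E.symm.injective (Subtype.ext (hxi.symm.trans hxj)))

theorem mengerAux : ∀ (n : ℕ) (G : SimpleGraph V), G.edgeSet.ncard ≤ n → ∀ S T : Set V,
    ∃ Z : Set V, Sep G S T Z ∧ DisjPaths G S T Z.ncard := by
  intro n
  induction n with
  | zero =>
    intro G hG S T
    apply menger_of_no_edges _ S T
    rw [← Set.ncard_eq_zero (Set.toFinite _)]
    omega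
  | succ n IH =>
    intro G hG S T
    by_cases hE : G.edgeSet = ∅
    · exact menger_of_no_edges hE S T
    · obtain ⟨e, he⟩ := Set.nonempty_iff_ne_empty.2 hE
      obtain ⟨x, y, hxy⟩ : ∃ x y, G.Adj x y := by
        revert he
        induction e using Sym2.ind with
        | _ a b => exact fun he => ⟨a, b, (SimpleGraph.mem_edgeSet _).1 he⟩
      have hxyE : s(x, y) ∈ G.edgeSet := hxy
      have hdiffcard : (G.edgeSet \ {s(x, y)}).ncard ≤ n := by
        have := Set.ncard_diff_singleton_lt_of_mem hxyE (Set.toFinite _)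
        omega
      have hG₁card : (G.deleteEdges {s(x, y)}).edgeSet.ncard ≤ n := by
        rw [edgeSet_deleteEdges]; exact hdiffcard
      have hG₂card : (collapse G x y).edgeSet.ncard ≤ n :=
        le_trans (collapse_edge_ncard hxy) hdiffcard
      obtain ⟨Z₂, hsep₂, hdp₂⟩ := IH (collapse G x y) hG₂card (cf x y '' S) (cf x y '' T)
      have hlift : DisjPaths G S T Z₂.ncard := by
        obtain ⟨a, b, p, haS, hbT, hd⟩ := hdp₂
        have hch : ∀ i : Fin Z₂.ncard,
            ∃ (sa sb : V), sa ∈ S ∧ sb ∈ T ∧ cf x y sa = a i ∧ cf x y sb = b i := by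
          intro i
          obtain ⟨sa, hsa, hfa⟩ := haS i
          obtain ⟨sb, hsb, hfb⟩ := hbT i
          exact ⟨sa, sb, hsa, hsb, hfa, hfb⟩
        choose sa sb hsaS hsbT hfa hfb using hch
        have hlw : ∀ i, ∃ pw : G.Walk (sa i) (sb i), ∀ c ∈ pw.support, cf x y c ∈ (p i).support :=
          fun i => collapse_lift hxy (p i) (sa i) (sb i) (hfa i) (hfb i)
        choose pw hpw using hlw
        exact ⟨sa, sb, pw, hsaS, hsbT, fun i j hij c hci hcj =>
          hd i j hij (cf x y c) (hpw i c hci) (hpw j c hcj)⟩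
      have hsepZ : Sep G S T (cf x y ⁻¹' Z₂) := by
        intro u v hu hv pp
        obtain ⟨q, hq⟩ := collapse_project x y pp
        obtain ⟨z, hz, hzq⟩ := hsep₂ ⟨u, hu, rfl⟩ ⟨v, hv, rfl⟩ q
        obtain ⟨d, hdp, hdz⟩ := hq z hzq
        exact ⟨d, Set.mem_preimage.2 (by rw [hdz]; exact hz), hdp⟩
      by_cases hle : (cf x y ⁻¹' Z₂).ncard ≤ Z₂.ncard
      · exact ⟨cf x y ⁻¹' Z₂, hsepZ, hlift.mono hle⟩
      · have hxZ₂ : x ∈ Z₂ := by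
          by_contra hx
          apply hle
          apply Set.ncard_le_ncard _ (Set.toFinite _)
          intro v hvZ
          rw [Set.mem_preimage] at hvZ
          by_cases hvy : v = y
          · rw [hvy, cf_y] at hvZ
            exact absurd hvZ hx
          · rwa [cf_of_ne hvy] at hvZ
        have hxZ : x ∈ cf x y ⁻¹' Z₂ := Set.mem_preimage.2 (by rw [cf_x hxy.ne]; exact hxZ₂)
        have hyZ : y ∈ cf x y ⁻¹' Z₂ := Set.mem_preimage.2 (by rw [cf_y]; exact hxZ₂)
        have hZsub : cf x y ⁻¹' Z₂ ⊆ insert y Z₂ := by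
          intro v hv
          rw [Set.mem_preimage] at hv
          by_cases hvy : v = y
          · exact hvy ▸ Set.mem_insert _ _
          · rw [cf_of_ne hvy] at hv
            exact Set.mem_insert_of_mem _ hv
        have hZcard : (cf x y ⁻¹' Z₂).ncard = Z₂.ncard + 1 := by
          have h1 : (cf x y ⁻¹' Z₂).ncard ≤ (insert y Z₂).ncard :=
            Set.ncard_le_ncard hZsub (Set.toFinite _)
          have h2 := Set.ncard_insert_le y Z₂
          omega
        obtain ⟨W₁, hsW₁, hdW₁⟩ := IH (G.deleteEdges {s(x, y)}) hG₁card S (cf x y ⁻¹' Z₂)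
        obtain ⟨W₂, hsW₂, hdW₂⟩ := IH (G.deleteEdges {s(x, y)}) hG₁card (cf x y ⁻¹' Z₂) T
        have hedges : ∀ {u z : V} (q : G.Walk u z),
            (∀ c ∈ q.support, c ∈ cf x y ⁻¹' Z₂ → c = z) →
            ∀ e' ∈ q.edges, e' ∈ (G.deleteEdges {s(x, y)}).edgeSet := by
          intro u z q hqonly e' he'
          rw [edgeSet_deleteEdges]
          refine ⟨q.edges_subset_edgeSet he', ?_⟩
          intro hmem
          rw [Set.mem_singleton_iff] at hmem
          have hxs : x ∈ q.support := q.fst_mem_support_of_mem_edges (hmem ▸ he')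
          have hys : y ∈ q.support := q.snd_mem_support_of_mem_edges (hmem ▸ he')
          have hx' := hqonly x hxs hxZ
          have hy' := hqonly y hys hyZ
          exact hxy.ne (hx'.trans hy'.symm)
        have keyS : Sep G S T W₁ := by
          intro u v hu hv pp
          obtain ⟨z0, hz0, hz0p⟩ := hsepZ hu hv pp
          obtain ⟨z, q, hzZ, hqsub, hqonly, -⟩ := exists_firstHit pp ⟨z0, hz0p, hz0⟩
          obtain ⟨w1, hw1, hw1s⟩ := hsW₁ hu hzZ (q.transfer _ (hedges q hqonly))
          rw [Walk.support_transfer] at hw1s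
          exact ⟨w1, hw1, hqsub _ hw1s⟩
        have keyT : Sep G S T W₂ := by
          intro u v hu hv pp
          obtain ⟨z0, hz0, hz0p⟩ := hsepZ hu hv pp
          have hz0r : z0 ∈ pp.reverse.support := by
            rw [Walk.support_reverse, List.mem_reverse]; exact hz0p
          obtain ⟨z, q, hzZ, hqsub, hqonly, -⟩ := exists_firstHit pp.reverse ⟨z0, hz0r, hz0⟩
          obtain ⟨w2, hw2, hw2s⟩ := hsW₂ hzZ hv ((q.transfer _ (hedges q hqonly)).reverse)
          rw [Walk.support_reverse, List.mem_reverse, Walk.support_transfer] at hw2s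
          have hw2p : w2 ∈ pp.support := by
            have := hqsub _ hw2s
            rwa [Walk.support_reverse, List.mem_reverse] at this
          exact ⟨w2, hw2, hw2p⟩
        by_cases h1 : W₁.ncard ≤ Z₂.ncard
        · exact ⟨W₁, keyS, hlift.mono h1⟩
        · by_cases h2 : W₂.ncard ≤ Z₂.ncard
          · exact ⟨W₂, keyT, hlift.mono h2⟩
          · refine ⟨cf x y ⁻¹' Z₂, hsepZ, ?_⟩
            have g1 : DisjPaths G S (cf x y ⁻¹' Z₂) (cf x y ⁻¹' Z₂).ncard :=
              (hdW₁.mono (by omega)).mono_graph (G.deleteEdges_le _)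
            have g2 : DisjPaths G (cf x y ⁻¹' Z₂) T (cf x y ⁻¹' Z₂).ncard :=
              (hdW₂.mono (by omega)).mono_graph (G.deleteEdges_le _)
            exact glue rfl hsepZ g1 g2

theorem menger (G : SimpleGraph V) (S T : Set V) :
    ∃ Z : Set V, Sep G S T Z ∧ DisjPaths G S T Z.ncard :=
  mengerAux G.edgeSet.ncard G le_rfl S T

end Prop71
namespace Prop71
open SimpleGraph
variable {V : Type} [Fintype V] [DecidableEq V]

/-- The boundary of a candidate left-set `P`: vertices of `P` that are in `T` or have a
neighbour outside `P`. -/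
def bdry (G : SimpleGraph V) (T P : Set V) : Set V :=
  {v | v ∈ P ∧ (v ∈ T ∨ ∃ b, G.Adj v b ∧ b ∉ P)}

lemma bdry_submod (G : SimpleGraph V) {T T' : Set V} (hT : T' ⊆ T) (P P' : Set V) :
    (bdry G T (P ∩ P')).ncard + (bdry G T' (P ∪ P')).ncard ≤
      (bdry G T P).ncard + (bdry G T' P').ncard := by
  have hU : bdry G T (P ∩ P') ∪ bdry G T' (P ∪ P') ⊆ bdry G T P ∪ bdry G T' P' := by
    rintro v (⟨⟨hP, hP'⟩, hor⟩ | ⟨hPP, hor⟩)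
    · rcases hor with hvT | ⟨b, hadj, hb⟩
      · exact Or.inl ⟨hP, Or.inl hvT⟩
      · by_cases hbP : b ∈ P
        · exact Or.inr ⟨hP', Or.inr ⟨b, hadj, fun hh => hb ⟨hbP, hh⟩⟩⟩
        · exact Or.inl ⟨hP, Or.inr ⟨b, hadj, hbP⟩⟩
    · rcases hor with hvT | ⟨b, hadj, hb⟩
      · rcases hPP with hP | hP'
        · exact Or.inl ⟨hP, Or.inl (hT hvT)⟩
        · exact Or.inr ⟨hP', Or.inl hvT⟩
      · rcases hPP with hP | hP'
        · exact Or.inl ⟨hP, Or.inr ⟨b, hadj, fun hh => hb (Or.inl hh)⟩⟩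
        · exact Or.inr ⟨hP', Or.inr ⟨b, hadj, fun hh => hb (Or.inr hh)⟩⟩
  have hI : bdry G T (P ∩ P') ∩ bdry G T' (P ∪ P') ⊆ bdry G T P ∩ bdry G T' P' := by
    rintro v ⟨⟨⟨hP, hP'⟩, -⟩, ⟨-, hor2⟩⟩
    rcases hor2 with hvT' | ⟨b, hadj, hb⟩
    · exact ⟨⟨hP, Or.inl (hT hvT')⟩, ⟨hP', Or.inl hvT'⟩⟩
    · exact ⟨⟨hP, Or.inr ⟨b, hadj, fun hh => hb (Or.inl hh)⟩⟩,
        ⟨hP', Or.inr ⟨b, hadj, fun hh => hb (Or.inr hh)⟩⟩⟩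
  have e1 := Set.ncard_union_add_ncard_inter (bdry G T (P ∩ P')) (bdry G T' (P ∪ P'))
    (Set.toFinite _) (Set.toFinite _)
  have e2 := Set.ncard_union_add_ncard_inter (bdry G T P) (bdry G T' P')
    (Set.toFinite _) (Set.toFinite _)
  have l1 := Set.ncard_le_ncard hU (Set.toFinite _)
  have l2 := Set.ncard_le_ncard hI (Set.toFinite _)
  omega

/-- Choice of an optimal left-set: minimize the boundary size, then the cardinality. -/
lemma exists_opt (G : SimpleGraph V) (S T : Set V) :
    ∃ P : Set V, S ⊆ P ∧
      (∀ P', S ⊆ P' → (bdry G T P).ncard ≤ (bdry G T P').ncard) ∧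
      (∀ P', S ⊆ P' → (bdry G T P').ncard = (bdry G T P).ncard → P.ncard ≤ P'.ncard) := by
  have hne : ((fun P => (bdry G T P).ncard) '' {P | S ⊆ P}).Nonempty :=
    ⟨_, Set.univ, Set.subset_univ _, rfl⟩
  set k := sInf ((fun P => (bdry G T P).ncard) '' {P | S ⊆ P}) with hk
  have hkmem := Nat.sInf_mem hne
  obtain ⟨P₀, hP₀S, hP₀k⟩ := hkmem
  have hne2 : {m | ∃ P : Set V, S ⊆ P ∧ (bdry G T P).ncard = k ∧ P.ncard = m}.Nonempty :=
    ⟨P₀.ncard, P₀, hP₀S, hP₀k, rfl⟩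
  obtain ⟨P, hPS, hPk, hPm⟩ := Nat.sInf_mem hne2
  refine ⟨P, hPS, ?_, ?_⟩
  · intro P' hP'
    rw [hPk]
    exact Nat.sInf_le ⟨P', hP', rfl⟩
  · intro P' hP' heq
    rw [hPm]
    exact Nat.sInf_le ⟨P', hP', by rw [heq, hPk], rfl⟩

end Prop71
open Prop71 in
theorem linear_society_decomposition' {V : Type} [Finite V] (G : SimpleGraph V)
    (l : ℕ) (hl : 1 ≤ l) (Λ : Fin l → V) (hinj : Function.Injective Λ)
    (hcomp : ∀ x : V, ∃ i, G.Reachable x (Λ i))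
    (w : ℕ) (hdepth : ∀ r : ℕ, HasTransaction G Λ r → r ≤ w) :
    ∃ B : Fin l → Set V,
      (⋃ i, B i) = Set.univ ∧
      (∀ x y : V, G.Adj x y → ∃ i, x ∈ B i ∧ y ∈ B i) ∧
      (∀ i, Λ i ∈ B i) ∧
      (∀ i j h : Fin l, i ≤ j → j ≤ h → B i ∩ B h ⊆ B j) ∧
      ∀ i j : Fin l, (i : ℕ) + 1 = (j : ℕ) → (B i ∩ B j).ncard ≤ w := by
  classical
  letI : Fintype V := Fintype.ofFinite V
  set SS : ℕ → Set V := fun c => Λ '' {i | (i : ℕ) < c} with hSS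
  set TT : ℕ → Set V := fun c => Λ '' {i | c ≤ (i : ℕ)} with hTT
  have hSmono : ∀ {c c' : ℕ}, c ≤ c' → SS c ⊆ SS c' := by
    intro c c' h
    exact Set.image_mono (fun i hi => lt_of_lt_of_le hi h)
  have hTmono : ∀ {c c' : ℕ}, c ≤ c' → TT c' ⊆ TT c := by
    intro c c' h
    exact Set.image_mono (fun i hi => le_trans h hi)
  choose P hPS hPmin hPcard using fun c : ℕ => exists_opt G (SS c) (TT c)
  have chain : ∀ {c c' : ℕ}, c ≤ c' → P c ⊆ P c' := by
    intro c c' hcc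
    have hsi : SS c ⊆ P c ∩ P c' :=
      Set.subset_inter (hPS c) (fun v hv => hPS c' (hSmono hcc hv))
    have h1 := hPmin c (P c ∩ P c') hsi
    have h2 := hPmin c' (P c ∪ P c') (fun v hv => Or.inr (hPS c' hv))
    have hsub := bdry_submod G (hTmono hcc) (P c) (P c')
    have heq : (bdry G (TT c) (P c ∩ P c')).ncard = (bdry G (TT c) (P c)).ncard := by omega
    have hm := hPcard c (P c ∩ P c') hsi heq
    have hEq : P c ∩ P c' = P c :=
      Set.eq_of_subset_of_ncard_le Set.inter_subset_left hm (Set.toFinite _)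
    intro v hv
    rw [← hEq] at hv
    exact hv.2
  have hkw : ∀ c : ℕ, 0 < c → c < l → (bdry G (TT c) (P c)).ncard ≤ w := by
    intro c hc0 hcl
    obtain ⟨Z, hsep, hdp⟩ := menger G (SS c) (TT c)
    by_cases hZw : Z.ncard ≤ w
    · set P' : Set V := {v | v ∈ Z ∨ ∃ u ∈ SS c, ∃ p : G.Walk u v, ∀ a ∈ p.support, a ∉ Z}
        with hP'
      have hSP' : SS c ⊆ P' := by
        intro u hu
        by_cases huZ : u ∈ Z
        · exact Or.inl huZ
        · refine Or.inr ⟨u, hu, Walk.nil, ?_⟩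
          intro a ha
          simp only [SimpleGraph.Walk.support_nil, List.mem_singleton] at ha
          rwa [ha]
      have hbd : bdry G (TT c) P' ⊆ Z := by
        rintro v ⟨hvP', hvor⟩
        by_contra hvZ
        rcases hvP' with hvZ' | ⟨u, hu, p, hp⟩
        · exact hvZ hvZ'
        · rcases hvor with hvT | ⟨b, hadj, hbP'⟩
          · obtain ⟨z, hz, hzs⟩ := hsep hu hvT p
            exact (hp z hzs) hz
          · by_cases hbZ : b ∈ Z
            · exact hbP' (Or.inl hbZ)
            · refine hbP' (Or.inr ⟨u, hu, p.concat hadj, ?_⟩)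
              intro a ha
              simp only [SimpleGraph.Walk.support_concat, List.concat_eq_append,
                List.mem_append, List.mem_singleton] at ha
              rcases ha with ha | ha
              · exact hp a ha
              · exact ha ▸ hbZ
      calc (bdry G (TT c) (P c)).ncard
          ≤ (bdry G (TT c) P').ncard := hPmin c P' hSP'
        _ ≤ Z.ncard := Set.ncard_le_ncard hbd (Set.toFinite _)
        _ ≤ w := hZw
    · exfalso
      push_neg at hZw
      have hdp' := hdp.mono (show w + 1 ≤ Z.ncard by omega)
      obtain ⟨a, b, p, haS, hbT, hd⟩ := hdp'
      have hea : ∀ i, ∃ j : Fin l, (j : ℕ) < c ∧ Λ j = a i := by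
        intro i; obtain ⟨j, hj, hje⟩ := haS i; exact ⟨j, hj, hje⟩
      choose ef hef1 hef2 using hea
      have heb : ∀ i, ∃ j : Fin l, c ≤ (j : ℕ) ∧ Λ j = b i := by
        intro i; obtain ⟨j, hj, hje⟩ := hbT i; exact ⟨j, hj, hje⟩
      choose ff hff1 hff2 using heb
      have htr : HasTransaction G Λ (w + 1) := by
        refine ⟨{i : Fin l | (i : ℕ) < c}, {i : Fin l | c ≤ (i : ℕ)}, ?_, ?_, ?_, ef, ff,
          fun i => ((p i).bypass.copy (hef2 i).symm (hff2 i).symm), ?_, hef1, hff1, ?_⟩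
        · rintro ⟨i1, i2, i3, i4, h12, h23, h34, (⟨g1, g2, g3, g4⟩ | ⟨g1, g2, g3, g4⟩)⟩ <;>
            simp only [Set.mem_setOf_eq, not_lt] at g1 g2 g3 g4 <;>
            [skip; skip] <;> first
          | (have e1 := Fin.lt_def.mp h12; have e2 := Fin.lt_def.mp h23;
             have e3 := Fin.lt_def.mp h34; omega)
        · rintro ⟨i1, i2, i3, i4, h12, h23, h34, (⟨g1, g2, g3, g4⟩ | ⟨g1, g2, g3, g4⟩)⟩ <;>
            simp only [Set.mem_setOf_eq, not_le] at g1 g2 g3 g4 <;> first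
          | (have e1 := Fin.lt_def.mp h12; have e2 := Fin.lt_def.mp h23;
             have e3 := Fin.lt_def.mp h34; omega)
        · rw [Set.disjoint_left]
          intro i hi hi2
          simp only [Set.mem_setOf_eq] at hi hi2
          omega
        · intro i
          rw [SimpleGraph.Walk.isPath_copy]
          exact (p i).bypass_isPath
        · intro i j hij x hx
          rw [SimpleGraph.Walk.support_copy] at hx ⊢
          intro hx2
          exact hd i j hij x ((p i).support_bypass_subset hx) ((p j).support_bypass_subset hx2)
      exact absurd (hdepth _ htr) (by omega)
  have hP0 : P 0 = ∅ := by
    have hS0 : SS 0 ⊆ (∅ : Set V) := by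
      rintro v ⟨i, hi, -⟩
      exact absurd (show (i : ℕ) < 0 from hi) (by omega)
    have h2 : bdry G (TT 0) (∅ : Set V) = ∅ := by
      ext v
      simp [bdry]
    have h1 := hPmin 0 ∅ hS0
    rw [h2, Set.ncard_empty] at h1
    have hb' : (bdry G (TT 0) (∅ : Set V)).ncard = (bdry G (TT 0) (P 0)).ncard := by
      rw [h2, Set.ncard_empty]; omega
    have h3 := hPcard 0 ∅ hS0 hb'
    rw [Set.ncard_empty] at h3
    exact (Set.ncard_eq_zero (Set.toFinite _)).mp (Nat.le_zero.mp h3)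
  have hPl : ∀ v : V, v ∈ P l := by
    have hbuniv : bdry G (TT l) (Set.univ : Set V) = ∅ := by
      ext v
      simp only [bdry, Set.mem_setOf_eq, Set.mem_univ, true_and, Set.mem_empty_iff_false,
        iff_false, not_or]
      constructor
      · rintro ⟨i, hi, -⟩
        exact absurd (show l ≤ (i : ℕ) from hi) (by have := i.isLt; omega)
      · rintro ⟨b, -, hb⟩
        exact hb trivial
    have h1 := hPmin l Set.univ (Set.subset_univ _)
    rw [hbuniv, Set.ncard_empty] at h1
    have hbe : bdry G (TT l) (P l) = ∅ :=
      (Set.ncard_eq_zero (Set.toFinite _)).mp (Nat.le_zero.mp h1)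
    have hclosed : ∀ a b : V, a ∈ P l → G.Adj a b → b ∈ P l := by
      intro a b ha hab
      by_contra hb
      have : a ∈ bdry G (TT l) (P l) := ⟨ha, Or.inr ⟨b, hab, hb⟩⟩
      rw [hbe] at this
      exact this
    have hstay : ∀ {a b : V} (q : G.Walk a b), a ∈ P l → b ∈ P l := by
      intro a b q
      induction q with
      | nil => exact id
      | cons h q ih => exact fun ha => ih (hclosed _ _ ha h)
    intro v
    obtain ⟨i, hi⟩ := hcomp v
    exact hstay hi.some.reverse (hPS l ⟨i, i.isLt, rfl⟩)
  set Q : ℕ → Set V := fun c => (P c)ᶜ ∪ bdry G (TT c) (P c) with hQ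
  have hQmono : ∀ {c c' : ℕ}, c ≤ c' → Q c' ⊆ Q c := by
    intro c c' h v hv
    by_cases hvc : v ∈ P c
    · rcases hv with hvn | ⟨hvP', hor⟩
      · exact absurd (chain h hvc) hvn
      · refine Or.inr ⟨hvc, ?_⟩
        rcases hor with hvT | ⟨b, hadj, hb⟩
        · exact Or.inl (hTmono h hvT)
        · exact Or.inr ⟨b, hadj, fun hh => hb (chain h hh)⟩
    · exact Or.inl hvc
  have hex : ∀ v : V, ∃ c, v ∈ P c := fun v => ⟨l, hPl v⟩
  have hmP : ∀ v, v ∈ P (Nat.find (hex v)) := fun v => Nat.find_spec (hex v)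
  have hmnot : ∀ v, ∀ j < Nat.find (hex v), v ∉ P j := fun v j hj => Nat.find_min (hex v) hj
  have hm1 : ∀ v, 1 ≤ Nat.find (hex v) := by
    intro v
    by_contra h
    push_neg at h
    have h0 : Nat.find (hex v) = 0 := by omega
    have := hmP v
    rw [h0, hP0] at this
    exact this
  have hml : ∀ v, Nat.find (hex v) ≤ l := fun v => Nat.find_min' (hex v) (hPl v)
  have hmem : ∀ (v : V) (i : Fin l), (i : ℕ) = Nat.find (hex v) - 1 →
      v ∈ P ((i : ℕ) + 1) ∩ Q (i : ℕ) := by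
    intro v i hi
    constructor
    · have hE : (i : ℕ) + 1 = Nat.find (hex v) := by have := hm1 v; omega
      rw [hE]
      exact hmP v
    · exact Or.inl (hmnot v _ (by have := hm1 v; omega))
  refine ⟨fun i => P ((i : ℕ) + 1) ∩ Q (i : ℕ), ?_, ?_, ?_, ?_, ?_⟩
  · rw [Set.eq_univ_iff_forall]
    intro v
    rw [Set.mem_iUnion]
    exact ⟨⟨Nat.find (hex v) - 1, by have := hm1 v; have := hml v; omega⟩, hmem v _ rfl⟩
  · have key : ∀ x y : V, G.Adj x y → Nat.find (hex x) ≤ Nat.find (hex y) →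
        ∃ i : Fin l, x ∈ P ((i : ℕ) + 1) ∩ Q (i : ℕ) ∧ y ∈ P ((i : ℕ) + 1) ∩ Q (i : ℕ) := by
      intro x y hadj hmxy
      refine ⟨⟨Nat.find (hex y) - 1, by have := hm1 y; have := hml y; omega⟩, ?_, hmem y _ rfl⟩
      constructor
      · show x ∈ P ((Nat.find (hex y) - 1) + 1)
        have hE : (Nat.find (hex y) - 1) + 1 = Nat.find (hex y) := by have := hm1 y; omega
        rw [hE]
        exact chain hmxy (hmP x)
      · show x ∈ Q (Nat.find (hex y) - 1)
        by_cases hx : x ∈ P (Nat.find (hex y) - 1)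
        · exact Or.inr ⟨hx, Or.inr ⟨y, hadj, hmnot y _ (by have := hm1 y; omega)⟩⟩
        · exact Or.inl hx
    intro x y hadj
    rcases le_total (Nat.find (hex x)) (Nat.find (hex y)) with h | h
    · exact key x y hadj h
    · obtain ⟨i, h1, h2⟩ := key y x hadj.symm h
      exact ⟨i, h2, h1⟩
  · intro i
    constructor
    · exact hPS _ ⟨i, Nat.lt_succ_self _, rfl⟩
    · by_cases hP : Λ i ∈ P (i : ℕ)
      · exact Or.inr ⟨hP, Or.inl ⟨i, show (i : ℕ) ≤ (i : ℕ) from le_refl _, rfl⟩⟩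
      · exact Or.inl hP
  · intro i j h hij hjh v hv
    obtain ⟨⟨hv1, hv2⟩, ⟨hv3, hv4⟩⟩ := hv
    refine ⟨chain (by exact Nat.succ_le_succ hij) hv1, hQmono (show (j : ℕ) ≤ (h : ℕ) from hjh) hv4⟩
  · intro i j hij
    have hsub : (P ((i : ℕ) + 1) ∩ Q (i : ℕ)) ∩ (P ((j : ℕ) + 1) ∩ Q (j : ℕ)) ⊆
        bdry G (TT (j : ℕ)) (P (j : ℕ)) := by
      rintro v ⟨⟨hv1, -⟩, ⟨-, hv4⟩⟩
      rw [hij] at hv1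
      rcases hv4 with hvn | hb
      · exact absurd hv1 hvn
      · exact hb
    have hb := hkw (j : ℕ) (by omega) j.isLt
    exact le_trans (Set.ncard_le_ncard hsub (Set.toFinite _)) hb

/-- **Proposition 7.1.** Let `⟨G, Λ⟩` be a linear society (with `Λ = ⟨v_1, …, v_l⟩`
injective and each connected component of `G` meeting `V(Λ)`) of depth at most `w`.
Then there is a sequence `B 0, …, B (l-1)` of subsets of `V(G)` such that:
(1) the `B i` cover `V(G)`; (2) every edge lies in some `B i`; (3) `Λ i ∈ B i`;
(4) `B i ∩ B h ⊆ B j` whenever `i ≤ j ≤ h`; and (5) consecutive intersections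
`B i ∩ B (i+1)` have size at most `w`. -/
theorem linear_society_decomposition {V : Type} [Finite V] (G : SimpleGraph V)
    (l : ℕ) (hl : 1 ≤ l) (Λ : Fin l → V) (hinj : Function.Injective Λ)
    (hcomp : ∀ x : V, ∃ i, G.Reachable x (Λ i))
    (w : ℕ) (hdepth : ∀ r : ℕ, HasTransaction G Λ r → r ≤ w) :
    ∃ B : Fin l → Set V,
      (⋃ i, B i) = Set.univ ∧
      (∀ x y : V, G.Adj x y → ∃ i, x ∈ B i ∧ y ∈ B i) ∧
      (∀ i, Λ i ∈ B i) ∧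
      (∀ i j h : Fin l, i ≤ j → j ≤ h → B i ∩ B h ⊆ B j) ∧
      ∀ i j : Fin l, (i : ℕ) + 1 = (j : ℕ) → (B i ∩ B j).ncard ≤ w := by
  exact linear_society_decomposition' G l hl Λ hinj hcomp w hdepth
end
end
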